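/- arXiv:2507.18145 — 5 statements merged into one kernel-verified Lean document; each statement's English description precedes it below -/
import Mathlib

section
/- If a vertex property over Π is defined by some Mean-GNN and is also defined by some GML formula, then it is defined by an ML formula. -/
/-!
Scaling a graph by `c` (replacing every vertex by `c` copies) multiplies every successor count by
`c` but leaves every mean unchanged, so a Mean-GNN gives the same answer on `(G, v)` and on a copy
of `v` in the scaled graph. On the other hand, once `c` exceeds every grade of the GML formula, a
graded diamond `◊^{≥n}φ` with `n ≥ 1` holds in the scaled graph exactly when `◊φ` holds in `G`.
Hence on every graph the Mean-GNN agrees with the ML formula obtained by forgetting the grades.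
-/

open scoped Classical

/-- A `α`-labeled finite directed graph. -/
structure LabeledGraph (α : Type) : Type 1 where
  V : Type
  [fintypeV : Fintype V]
  adj : V → V → Prop
  label : V → α → Prop

attribute [instance] LabeledGraph.fintypeV

namespace LabeledGraph

variable {α : Type}

/-- The neighborhood (set of successors) of a vertex. -/
def nbhd (G : LabeledGraph α) (v : G.V) : Set G.V := {u | G.adj v u}

/-- The neighborhood of a vertex, as a finset. -/
noncomputable def nbhdFinset (G : LabeledGraph α) (v : G.V) : Finset G.V :=
  Finset.univ.filter (fun u => G.adj v u)

/-- The `c`-scaling of a graph: each vertex is multiplied `c` times. -/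
def scale (G : LabeledGraph α) (c : ℕ) : LabeledGraph α where
  V := G.V × Fin c
  adj := fun p q => G.adj p.1 q.1
  label := fun p => G.label p.1

end LabeledGraph

/-- Formulas of modal logic ML. -/
inductive ML (α : Type) : Type where
  | atom : α → ML α
  | neg  : ML α → ML α
  | or   : ML α → ML α → ML α
  | dia  : ML α → ML α

/-- Satisfaction for ML. -/
def ML.sat {α : Type} (G : LabeledGraph α) : ML α → G.V → Prop
  | .atom p, v => G.label v p
  | .neg φ, v => ¬ ML.sat G φ v
  | .or φ ψ, v => ML.sat G φ v ∨ ML.sat G ψ v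
  | .dia φ, v => ∃ u, G.adj v u ∧ ML.sat G φ u

/-- Formulas of graded modal logic GML. -/
inductive GML (α : Type) : Type where
  | atom : α → GML α
  | neg  : GML α → GML α
  | or   : GML α → GML α → GML α
  | dia  : ℕ → GML α → GML α

/-- Satisfaction for GML: `dia n φ` is `◊^{≥n} φ`. -/
def GML.sat {α : Type} (G : LabeledGraph α) : GML α → G.V → Prop
  | .atom p, v => G.label v p
  | .neg φ, v => ¬ GML.sat G φ v
  | .or φ ψ, v => GML.sat G φ v ∨ GML.sat G ψ v
  | .dia n φ, v => n ≤ {u | G.adj v u ∧ GML.sat G φ u}.ncard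

/-- Formulas of ratio modal logic RML; diamonds carry a ratio `r ∈ [0,1]`. -/
inductive RML (α : Type) : Type where
  | atom  : α → RML α
  | neg   : RML α → RML α
  | or    : RML α → RML α → RML α
  | diaGe : Set.Icc (0:ℝ) 1 → RML α → RML α
  | diaGt : Set.Icc (0:ℝ) 1 → RML α → RML α

/-- Satisfaction for RML. If a vertex has no successors then `◊^{≥r}φ`
holds and `◊^{>r}φ` fails; otherwise the fraction of successors satisfying
`φ` is compared with `r`. -/
noncomputable def RML.sat {α : Type} (G : LabeledGraph α) : RML α → G.V → Prop
  | .atom p, v => G.label v p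
  | .neg φ, v => ¬ RML.sat G φ v
  | .or φ ψ, v => RML.sat G φ v ∨ RML.sat G ψ v
  | .diaGe r φ, v => (G.nbhd v).Nonempty →
      (r : ℝ) ≤ ({u | G.adj v u ∧ RML.sat G φ u}.ncard : ℝ) / ((G.nbhd v).ncard : ℝ)
  | .diaGt r φ, v => (G.nbhd v).Nonempty ∧
      (r : ℝ) < ({u | G.adj v u ∧ RML.sat G φ u}.ncard : ℝ) / ((G.nbhd v).ncard : ℝ)

/-- Formulas of AFML[1] (diamond fragment of alternation-free modal logic). -/
inductive AFML1 (α : Type) : Type where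
  | atom   : α → AFML1 α
  | natom  : α → AFML1 α
  | boxBot : AFML1 α
  | and    : AFML1 α → AFML1 α → AFML1 α
  | or     : AFML1 α → AFML1 α → AFML1 α
  | dia    : AFML1 α → AFML1 α

/-- Satisfaction for AFML[1]. -/
def AFML1.sat {α : Type} (G : LabeledGraph α) : AFML1 α → G.V → Prop
  | .atom p, v => G.label v p
  | .natom p, v => ¬ G.label v p
  | .boxBot, v => ∀ u, ¬ G.adj v u
  | .and φ ψ, v => AFML1.sat G φ v ∧ AFML1.sat G ψ v
  | .or φ ψ, v => AFML1.sat G φ v ∨ AFML1.sat G ψ v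
  | .dia φ, v => ∃ u, G.adj v u ∧ AFML1.sat G φ u

/-- Modal depth of an AFML[1] formula. -/
def AFML1.depth {α : Type} : AFML1 α → ℕ
  | .atom _ => 0
  | .natom _ => 0
  | .boxBot => 1
  | .and φ ψ => max (AFML1.depth φ) (AFML1.depth ψ)
  | .or φ ψ => max (AFML1.depth φ) (AFML1.depth ψ)
  | .dia φ => AFML1.depth φ + 1

/-- Formulas of AFML[2] (box fragment of alternation-free modal logic). -/
inductive AFML2 (α : Type) : Type where
  | atom   : α → AFML2 α
  | natom  : α → AFML2 α
  | diaTop : AFML2 α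
  | and    : AFML2 α → AFML2 α → AFML2 α
  | or     : AFML2 α → AFML2 α → AFML2 α
  | box    : AFML2 α → AFML2 α

/-- Satisfaction for AFML[2]. -/
def AFML2.sat {α : Type} (G : LabeledGraph α) : AFML2 α → G.V → Prop
  | .atom p, v => G.label v p
  | .natom p, v => ¬ G.label v p
  | .diaTop, v => ∃ u, G.adj v u
  | .and φ ψ, v => AFML2.sat G φ v ∧ AFML2.sat G ψ v
  | .or φ ψ, v => AFML2.sat G φ v ∨ AFML2.sat G ψ v
  | .box φ, v => ∀ u, G.adj v u → AFML2.sat G φ u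

/-- Alternation-free modal logic: AFML[1] formulas together with AFML[2] formulas. -/
def AFML (α : Type) : Type := AFML1 α ⊕ AFML2 α

/-- Satisfaction for AFML. -/
def AFML.sat {α : Type} (G : LabeledGraph α) : AFML α → G.V → Prop
  | .inl φ => AFML1.sat G φ
  | .inr φ => AFML2.sat G φ

/-- The three aggregation functions. -/
inductive Agg : Type where
  | sum : Agg
  | mean : Agg
  | max : Agg

/-- Apply an aggregation function componentwise to the (multiset of) values of `x`
over the finset `s`; empty aggregation yields `0` (so mean of the empty multiset is `0`). -/
noncomputable def Agg.apply {V : Type} : Agg → Finset V → (V → ℝ) → ℝ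
  | .sum, s, x => ∑ u ∈ s, x u
  | .mean, s, x => (∑ u ∈ s, x u) / (s.card : ℝ)
  | .max, s, x => if h : s.Nonempty then s.sup' h x else 0

/-- A GNN: `L` layers, dimensions `δ 0, …, δ L` with `δ 0 = |α|`,
combination functions `com ℓ : ℝ^{δ ℓ} × ℝ^{δ ℓ} → ℝ^{δ (ℓ+1)}` for `ℓ < L`,
and a threshold classification function `CLS(x) = 1 iff x_clsIdx ∼ clsThr`
where `∼` is `>` if `clsStrict` and `≥` otherwise. -/
structure GNN (α : Type) [Fintype α] : Type where
  L : ℕ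
  δ : ℕ → ℕ
  hδ0 : δ 0 = Fintype.card α
  com : (ℓ : ℕ) → (Fin (δ ℓ) → ℝ) → (Fin (δ ℓ) → ℝ) → (Fin (δ (ℓ+1)) → ℝ)
  clsIdx : Fin (δ L)
  clsStrict : Bool
  clsThr : ℝ

/-- The feature vector computed by a GNN (with aggregation `agg`) at layer `ℓ`
at vertex `v` of graph `G`. Layer 0 yields the 0/1 indicator vector of the labels. -/
noncomputable def GNN.feat {α : Type} [Fintype α] (𝒢 : GNN α) (agg : Agg)
    (G : LabeledGraph α) : (ℓ : ℕ) → G.V → Fin (𝒢.δ ℓ) → ℝ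
  | 0, v, i => if G.label v ((Fintype.equivFin α).symm (Fin.cast 𝒢.hδ0 i)) then 1 else 0
  | (ℓ+1), v, i =>
      𝒢.com ℓ (𝒢.feat agg G ℓ v)
        (fun j => agg.apply (G.nbhdFinset v) (fun u => 𝒢.feat agg G ℓ u j)) i

/-- The GNN accepts a pointed graph iff the classification function outputs 1 on
the final feature vector. -/
noncomputable def GNN.accepts {α : Type} [Fintype α] (𝒢 : GNN α) (agg : Agg)
    (G : LabeledGraph α) (v : G.V) : Prop :=
  if 𝒢.clsStrict then 𝒢.clsThr < 𝒢.feat agg G 𝒢.L v 𝒢.clsIdx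
  else 𝒢.clsThr ≤ 𝒢.feat agg G 𝒢.L v 𝒢.clsIdx

/-- A GNN is simple with activation function `f` if each combination function
has the form `COM(x_v, x_a) = f(x_v·C + x_a·A + b)` (componentwise `f`). -/
def GNN.IsSimple {α : Type} [Fintype α] (𝒢 : GNN α) (f : ℝ → ℝ) : Prop :=
  ∀ ℓ < 𝒢.L, ∃ (C A : Fin (𝒢.δ ℓ) → Fin (𝒢.δ (ℓ+1)) → ℝ) (b : Fin (𝒢.δ (ℓ+1)) → ℝ),
    ∀ (xv xa : Fin (𝒢.δ ℓ) → ℝ) (i : Fin (𝒢.δ (ℓ+1))),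
      𝒢.com ℓ xv xa i = f ((∑ j, xv j * C j i) + (∑ j, xa j * A j i) + b i)

/-- All combination functions of the GNN are continuous. -/
def GNN.HasContinuousCom {α : Type} [Fintype α] (𝒢 : GNN α) : Prop :=
  ∀ ℓ < 𝒢.L,
    Continuous (fun p : (Fin (𝒢.δ ℓ) → ℝ) × (Fin (𝒢.δ ℓ) → ℝ) => 𝒢.com ℓ p.1 p.2)

/-- Truncated ReLU. -/
noncomputable def reluStar : ℝ → ℝ := fun x => min (max 0 x) 1

/-- ReLU. -/
noncomputable def relu : ℝ → ℝ := fun x => max 0 x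

/-- Two pointed graphs have the same vertex labels at their distinguished vertices. -/
def labelsEq {α : Type} (G1 G2 : LabeledGraph α) (v1 : G1.V) (v2 : G2.V) : Prop :=
  ∀ p, G1.label v1 p ↔ G2.label v2 p

/-- Spoiler wins the `ℓ`-round ML game on `((G1,v1),(G2,v2))`. -/
def spoilerWinsML {α : Type} (G1 G2 : LabeledGraph α) : ℕ → G1.V → G2.V → Prop
  | 0, v1, v2 => ¬ labelsEq G1 G2 v1 v2
  | (ℓ+1), v1, v2 =>
      ¬ labelsEq G1 G2 v1 v2
      ∨ (∃ u1, G1.adj v1 u1 ∧ ∀ u2, G2.adj v2 u2 → spoilerWinsML G1 G2 ℓ u1 u2)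
      ∨ (∃ u2, G2.adj v2 u2 ∧ ∀ u1, G1.adj v1 u1 → spoilerWinsML G1 G2 ℓ u1 u2)

/-- Spoiler wins the `ℓ`-round AFML[1] game on `((G1,v1),(G2,v2))`. -/
def spoilerWinsAFML1 {α : Type} (G1 G2 : LabeledGraph α) : ℕ → G1.V → G2.V → Prop
  | 0, v1, v2 => ¬ labelsEq G1 G2 v1 v2
  | (ℓ+1), v1, v2 =>
      ¬ labelsEq G1 G2 v1 v2
      ∨ ((∀ u, ¬ G1.adj v1 u) ∧ (∃ u, G2.adj v2 u))
      ∨ (∃ u1, G1.adj v1 u1 ∧ ∀ u2, G2.adj v2 u2 → spoilerWinsAFML1 G1 G2 ℓ u1 u2)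

/-- Spoiler wins the `ℓ`-round GML game with counting bound `c` on `((G1,v1),(G2,v2))`. -/
def spoilerWinsGML {α : Type} (c : ℕ) (G1 G2 : LabeledGraph α) : ℕ → G1.V → G2.V → Prop
  | 0, v1, v2 => ¬ labelsEq G1 G2 v1 v2
  | (ℓ+1), v1, v2 =>
      ¬ labelsEq G1 G2 v1 v2
      ∨ (∃ U1 : Finset G1.V, (∀ u ∈ U1, G1.adj v1 u) ∧ 0 < U1.card ∧ U1.card ≤ c ∧
          ((G2.nbhd v2).ncard < U1.card ∨
            ∀ U2 : Finset G2.V, (∀ u ∈ U2, G2.adj v2 u) → U2.card = U1.card →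
              ∃ u2 ∈ U2, ∀ u1 ∈ U1, spoilerWinsGML c G1 G2 ℓ u1 u2))
      ∨ (∃ U2 : Finset G2.V, (∀ u ∈ U2, G2.adj v2 u) ∧ 0 < U2.card ∧ U2.card ≤ c ∧
          ((G1.nbhd v1).ncard < U2.card ∨
            ∀ U1 : Finset G1.V, (∀ u ∈ U1, G1.adj v1 u) → U1.card = U2.card →
              ∃ u1 ∈ U1, ∀ u2 ∈ U2, spoilerWinsGML c G1 G2 ℓ u1 u2))

/-- The ratio `1/2` as an element of `[0,1]`. -/
noncomputable def half : Set.Icc (0:ℝ) 1 := ⟨1/2, by norm_num⟩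

/-- `◊^{≥0}φ` holds everywhere; as ML has no constant `⊤`, it becomes `φ ∨ ¬φ`. -/
def GML.toML {α : Type} : GML α → ML α
  | .atom p => .atom p
  | .neg φ => .neg φ.toML
  | .or φ ψ => .or φ.toML ψ.toML
  | .dia 0 φ => .or φ.toML (.neg φ.toML)
  | .dia (_ + 1) φ => .dia φ.toML

def GML.maxGrade {α : Type} : GML α → ℕ
  | .atom _ => 0
  | .neg φ => φ.maxGrade
  | .or φ ψ => max φ.maxGrade ψ.maxGrade
  | .dia n φ => max n φ.maxGrade

lemma Agg.apply_mean_product_fst {V W : Type} (s : Finset V) {t : Finset W} (ht : t.Nonempty)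
    (f : V → ℝ) :
    Agg.mean.apply (s ×ˢ t) (fun w => f w.1) = Agg.mean.apply s f := by
  have ht : (t.card : ℝ) ≠ 0 := by exact_mod_cast ht.card_pos.ne'
  simp only [Agg.apply, Finset.sum_product, Finset.sum_const, nsmul_eq_mul, Finset.card_product,
    Nat.cast_mul]
  rw [← Finset.mul_sum, mul_comm (s.card : ℝ), mul_div_mul_left _ _ ht]

lemma ncard_setOf_fst_fin {V : Type} (c : ℕ) (P : V → Prop) :
    {w : V × Fin c | P w.1}.ncard = c * {u | P u}.ncard := by
  have hprod : {w : V × Fin c | P w.1} = {u | P u} ×ˢ (Set.univ : Set (Fin c)) := by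
    ext w
    simp
  rw [hprod, Set.ncard_prod, Set.ncard_univ, Nat.card_eq_fintype_card, Fintype.card_fin,
    mul_comm]

lemma Nat.le_mul_iff_pos_of_le {n c k : ℕ} (hn : 0 < n) (hnc : n ≤ c) :
    n ≤ c * k ↔ 0 < k := by
  rcases Nat.eq_zero_or_pos k with rfl | hk
  · simp [hn.ne']
  · exact iff_of_true (hnc.trans (Nat.le_mul_of_pos_right c hk)) hk

lemma LabeledGraph.nbhdFinset_scale {α : Type} (G : LabeledGraph α) (c : ℕ) (v : G.V)
    (i : Fin c) :
    (G.scale c).nbhdFinset (v, i) = G.nbhdFinset v ×ˢ Finset.univ := by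
  unfold nbhdFinset
  rw [← Finset.filter_product_left]
  rfl

lemma GNN.feat_mean_scale {α : Type} [Fintype α] (𝒢 : GNN α) (G : LabeledGraph α) {c : ℕ}
    (ℓ : ℕ) (w : (G.scale c).V) :
    𝒢.feat Agg.mean (G.scale c) ℓ w = 𝒢.feat Agg.mean G ℓ w.1 := by
  induction ℓ generalizing w with
  | zero => rfl
  | succ ℓ ih =>
    obtain ⟨v, i⟩ := w
    have huniv : (Finset.univ : Finset (Fin c)).Nonempty := ⟨i, Finset.mem_univ i⟩
    funext k
    simp only [GNN.feat, G.nbhdFinset_scale, ih]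
    congr 1
    · exact ih (v, i)
    · funext j
      exact Agg.apply_mean_product_fst _ huniv (fun u => 𝒢.feat Agg.mean G ℓ u j)

lemma GNN.accepts_mean_scale {α : Type} [Fintype α] (𝒢 : GNN α) (G : LabeledGraph α)
    {c : ℕ} (w : (G.scale c).V) :
    𝒢.accepts Agg.mean (G.scale c) w ↔ 𝒢.accepts Agg.mean G w.1 := by
  simp only [GNN.accepts, 𝒢.feat_mean_scale]

/-- In the `c`-scaling every successor count is a multiple of `c`, so grades up to `c` only
test for the existence of a successor. -/
lemma GML.sat_scale_iff {α : Type} (G : LabeledGraph α) {c : ℕ} (φ : GML α)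
    (hφ : φ.maxGrade ≤ c) (w : (G.scale c).V) :
    GML.sat (G.scale c) φ w ↔ ML.sat G φ.toML w.1 := by
  induction φ generalizing w with
  | atom p => rfl
  | neg φ ih => exact not_congr (ih hφ w)
  | or φ ψ ihφ ihψ =>
    exact or_congr (ihφ (le_of_max_le_left hφ) w) (ihψ (le_of_max_le_right hφ) w)
  | dia n φ ih =>
    have hcount : {u | (G.scale c).adj w u ∧ GML.sat (G.scale c) φ u}.ncard
        = c * {u | G.adj w.1 u ∧ ML.sat G φ.toML u}.ncard := by
      simp only [ih (le_of_max_le_right hφ)]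
      exact ncard_setOf_fst_fin c (fun u => G.adj w.1 u ∧ ML.sat G φ.toML u)
    rcases n with _ | m
    · exact iff_of_true (Nat.zero_le _) (em _)
    · simp only [GML.sat, GML.toML, ML.sat, hcount]
      rw [Nat.le_mul_iff_pos_of_le m.succ_pos (le_of_max_le_left hφ),
        Set.ncard_pos (Set.toFinite _)]
      rfl

/-- If a vertex property is defined by some Mean-GNN and also by some
GML formula, then it is defined by an ML formula. -/
theorem stmt15 {α : Type} [Fintype α] (𝒢 : GNN α) (ψ : GML α)
    (h : ∀ (G : LabeledGraph α) (v : G.V), 𝒢.accepts Agg.mean G v ↔ GML.sat G ψ v) :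
    ∃ φ : ML α, ∀ (G : LabeledGraph α) (v : G.V),
      𝒢.accepts Agg.mean G v ↔ ML.sat G φ v := by
  refine ⟨ψ.toML, fun G v => ?_⟩
  let c := ψ.maxGrade + 1
  let v' : (G.scale c).V := (v, 0)
  calc 𝒢.accepts Agg.mean G v
      ↔ 𝒢.accepts Agg.mean (G.scale c) v' := (𝒢.accepts_mean_scale G v').symm
    _ ↔ GML.sat (G.scale c) ψ v' := h _ _
    _ ↔ ML.sat G ψ.toML v := GML.sat_scale_iff G ψ (Nat.le_succ _) v'
end

section
/- If a vertex property over Π is defined by some Mean-GNN all of whose combination functions are continuous and is also defined by some ML formula, then it is defined by an AFML formula. -/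
/-!
Let `k` be at least the modal depth of `ψ` and the number of layers, so that acceptance depends
only on the depth-`k` modal type of a vertex. Order types by `t ≤ t'` iff every AFML[1] formula of
depth at most `k` true at `t` is true at `t'`. If the type of `(G₁, v₁)` is below that of
`(G₂, v₂)`, one blends `G₁` into `G₂` to get graphs `H n` with a vertex that has the type of `v₂`
(hence is accepted iff `v₂` is) and in which every successor of `v₁` is repeated `n` times; as
`n → ∞`, mean aggregation and the continuity of the combination functions drive its features to
those of `v₁`. A strict threshold is an open condition, so acceptance propagates upwards along
`≤`; a non-strict one is closed, so rejection does. An upward closed property is the disjunction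
of the characteristic AFML[1] formulas of its finitely many types, and the negation of such a
formula is an AFML[2] formula.
-/

open scoped Classical

open Filter Topology

variable {α : Type}

def ModalType (α : Type) : ℕ → Type
  | 0 => Finset α
  | j + 1 => Finset α × Finset (ModalType α j)

namespace ModalType

noncomputable instance instFintype [Fintype α] : ∀ j, Fintype (ModalType α j)
  | 0 => inferInstanceAs (Fintype (Finset α))
  | j + 1 =>
    letI := instFintype j
    inferInstanceAs (Fintype (Finset α × Finset (ModalType α j)))

def labels : {j : ℕ} → ModalType α j → Finset α
  | 0, s => s
  | _ + 1, t => t.1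

/-- `Le j s t`: every AFML[1] formula of modal depth at most `j` true at type `s` is true at `t`
(see `AFML1.sat_char`). -/
def Le : (j : ℕ) → ModalType α j → ModalType α j → Prop
  | 0, s, t => s = t
  | j + 1, s, t => s.1 = t.1 ∧ (s.2 = ∅ → t.2 = ∅) ∧ ∀ x ∈ s.2, ∃ y ∈ t.2, Le j x y

theorem Le.refl : ∀ (j : ℕ) (t : ModalType α j), Le j t t
  | 0, _ => rfl
  | j + 1, _ => ⟨rfl, id, fun x hx => ⟨x, hx, Le.refl j x⟩⟩

end ModalType

namespace LabeledGraph

@[simp]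
theorem mem_nbhdFinset {G : LabeledGraph α} {v u : G.V} : u ∈ G.nbhdFinset v ↔ G.adj v u := by
  simp [nbhdFinset]

variable [Fintype α] (G : LabeledGraph α)

noncomputable def labelSet (v : G.V) : Finset α := Finset.univ.filter (G.label v)

noncomputable def modalType : (j : ℕ) → G.V → ModalType α j
  | 0, v => G.labelSet v
  | j + 1, v => (G.labelSet v, (G.nbhdFinset v).image (modalType j))

variable {G}

@[simp]
theorem mem_labelSet {v : G.V} {p : α} : p ∈ G.labelSet v ↔ G.label v p := by
  simp [labelSet]

theorem labels_modalType : ∀ (j : ℕ) (v : G.V), (G.modalType j v).labels = G.labelSet v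
  | 0, _ => rfl
  | _ + 1, _ => rfl

theorem label_iff_of_labelSet_eq {G' : LabeledGraph α} {v : G.V} {v' : G'.V}
    (h : G.labelSet v = G'.labelSet v') (p : α) : G.label v p ↔ G'.label v' p := by
  rw [← mem_labelSet, h, mem_labelSet]

theorem nbhdFinset_eq_empty_of_modalType_le {G' : LabeledGraph α} {j : ℕ} {v : G.V} {v' : G'.V}
    (h : ModalType.Le (j + 1) (G.modalType (j + 1) v) (G'.modalType (j + 1) v'))
    (hv : G.nbhdFinset v = ∅) : G'.nbhdFinset v' = ∅ :=
  Finset.image_eq_empty.mp (h.2.1 (by simp [modalType, hv]))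

end LabeledGraph

namespace ML

def depth : ML α → ℕ
  | .atom _ => 0
  | .neg φ => φ.depth
  | .or φ ψ => max φ.depth ψ.depth
  | .dia φ => φ.depth + 1

theorem nonempty_atoms : ML α → Nonempty α
  | .atom p => ⟨p⟩
  | .neg φ | .or φ _ | .dia φ => φ.nonempty_atoms

open LabeledGraph in
theorem sat_iff_of_modalType_eq [Fintype α] {G G' : LabeledGraph α} (φ : ML α) :
    ∀ {j : ℕ} {v : G.V} {v' : G'.V}, φ.depth ≤ j → G.modalType j v = G'.modalType j v' →
      (ML.sat G φ v ↔ ML.sat G' φ v') := by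
  induction φ with
  | atom p =>
    intro j v v' _ h
    have := congrArg ModalType.labels h
    simp only [labels_modalType] at this
    exact label_iff_of_labelSet_eq this p
  | neg φ ih => exact fun hd h => not_congr (ih hd h)
  | or φ ψ ihφ ihψ =>
    intro j v v' hd h
    rw [depth, max_le_iff] at hd
    exact or_congr (ihφ hd.1 h) (ihψ hd.2 h)
  | dia φ ih =>
    intro j v v' hd h
    obtain ⟨m, rfl⟩ : ∃ m, j = m + 1 := ⟨j - 1, by rw [depth] at hd; omega⟩
    have hd : φ.depth ≤ m := by rw [depth] at hd; omega
    have himage := congrArg Prod.snd h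
    simp only [modalType] at himage
    constructor
    · rintro ⟨u, hu, hφ⟩
      obtain ⟨u', hu', hty⟩ := Finset.mem_image.mp
        (himage ▸ Finset.mem_image_of_mem (G.modalType m) (mem_nbhdFinset.mpr hu))
      exact ⟨u', mem_nbhdFinset.mp hu', (ih hd hty.symm).mp hφ⟩
    · rintro ⟨u', hu', hφ⟩
      obtain ⟨u, hu, hty⟩ := Finset.mem_image.mp
        (himage.symm ▸ Finset.mem_image_of_mem (G'.modalType m) (mem_nbhdFinset.mpr hu'))
      exact ⟨u, mem_nbhdFinset.mp hu, (ih hd hty).mpr hφ⟩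

end ML

namespace AFML1

variable (p : α)

/- AFML has no constants `⊤` and `⊥`, so they are built from an atom `p`; the formula `ψ` of the
main theorem guarantees that there is one (`ML.nonempty_atoms`). -/
def top : AFML1 α := .or (.atom p) (.natom p)

def bot : AFML1 α := .and (.atom p) (.natom p)

noncomputable def iConj {ι : Type} (s : Finset ι) (f : ι → AFML1 α) : AFML1 α :=
  s.toList.foldr (fun i φ => .and (f i) φ) (top p)

noncomputable def iDisj {ι : Type} (s : Finset ι) (f : ι → AFML1 α) : AFML1 α :=
  s.toList.foldr (fun i φ => .or (f i) φ) (bot p)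

noncomputable def hasLabels [Fintype α] (s : Finset α) : AFML1 α :=
  iConj p Finset.univ fun q => if q ∈ s then .atom q else .natom q

noncomputable def char [Fintype α] : (j : ℕ) → ModalType α j → AFML1 α
  | 0, s => hasLabels p s
  | j + 1, t => .and (hasLabels p t.1)
      (if t.2 = ∅ then .boxBot else iConj p t.2 fun x => .dia (char j x))

variable {p} {G : LabeledGraph α}

@[simp]
theorem sat_iConj {ι : Type} (s : Finset ι) (f : ι → AFML1 α) (v : G.V) :
    AFML1.sat G (iConj p s f) v ↔ ∀ i ∈ s, AFML1.sat G (f i) v := by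
  rw [iConj]
  simp only [← Finset.mem_toList]
  induction s.toList with
  | nil => simpa [top, AFML1.sat] using em _
  | cons i l ih => simp [AFML1.sat, ih]

@[simp]
theorem sat_iDisj {ι : Type} (s : Finset ι) (f : ι → AFML1 α) (v : G.V) :
    AFML1.sat G (iDisj p s f) v ↔ ∃ i ∈ s, AFML1.sat G (f i) v := by
  rw [iDisj]
  simp only [← Finset.mem_toList]
  induction s.toList with
  | nil => simp [bot, AFML1.sat]
  | cons i l ih => simp [AFML1.sat, ih]

variable [Fintype α]

theorem sat_hasLabels (s : Finset α) (v : G.V) :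
    AFML1.sat G (hasLabels p s) v ↔ s = G.labelSet v := by
  simp only [hasLabels, sat_iConj, Finset.mem_univ, true_implies, Finset.ext_iff,
    LabeledGraph.mem_labelSet]
  refine forall_congr' fun q => ?_
  by_cases hq : q ∈ s <;> simp [hq, AFML1.sat]

theorem sat_char : ∀ (j : ℕ) (t : ModalType α j) (v : G.V),
    AFML1.sat G (char p j t) v ↔ ModalType.Le j t (G.modalType j v)
  | 0, s, v => sat_hasLabels s v
  | j + 1, t, v => by
    refine and_congr (sat_hasLabels t.1 v) ?_
    by_cases ht : t.2 = ∅
    · simp [ht, AFML1.sat, LabeledGraph.modalType, Finset.eq_empty_iff_forall_notMem]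
    · simp only [ht, if_false, sat_iConj, AFML1.sat, sat_char j, false_implies, true_and,
        LabeledGraph.modalType, Finset.mem_image, LabeledGraph.mem_nbhdFinset]
      grind

end AFML1

theorem AFML1.exists_sat_iff_of_monotone [Fintype α] (p : α) (k : ℕ)
    (P : (G : LabeledGraph α) → G.V → Prop)
    (hP : ∀ (G : LabeledGraph α) (v : G.V) (G' : LabeledGraph α) (v' : G'.V),
      ModalType.Le k (G.modalType k v) (G'.modalType k v') → P G v → P G' v') :
    ∃ φ : AFML1 α, ∀ (G : LabeledGraph α) (v : G.V), AFML1.sat G φ v ↔ P G v := by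
  refine ⟨iDisj p {t | ∃ (G : LabeledGraph α) (v : G.V), P G v ∧ G.modalType k v = t} (char p k),
    fun G v => ?_⟩
  simp only [sat_iDisj, sat_char, Finset.mem_filter, Finset.mem_univ, true_and]
  constructor
  · rintro ⟨_, ⟨G', v', hP', rfl⟩, hle⟩
    exact hP G' v' G v hle hP'
  · exact fun hPv => ⟨_, ⟨G, v, hPv, rfl⟩, ModalType.Le.refl k _⟩

def AFML1.neg : AFML1 α → AFML2 α
  | .atom p => .natom p
  | .natom p => .atom p
  | .boxBot => .diaTop
  | .and φ ψ => .or φ.neg ψ.neg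
  | .or φ ψ => .and φ.neg ψ.neg
  | .dia φ => .box φ.neg

@[simp]
theorem AFML1.sat_neg {G : LabeledGraph α} (φ : AFML1 α) (v : G.V) :
    AFML2.sat G φ.neg v ↔ ¬ AFML1.sat G φ v := by
  induction φ generalizing v <;> simp_all [AFML1.neg, AFML1.sat, AFML2.sat, not_or, imp_iff_not_or]

namespace GNN

variable [Fintype α] (𝒢 : GNN α)

theorem feat_succ_mean (G : LabeledGraph α) (ℓ : ℕ) (v : G.V) :
    𝒢.feat .mean G (ℓ + 1) v = 𝒢.com ℓ (𝒢.feat .mean G ℓ v)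
      (((G.nbhdFinset v).card : ℝ)⁻¹ • ∑ u ∈ G.nbhdFinset v, 𝒢.feat .mean G ℓ u) := by
  funext i
  simp only [GNN.feat, Agg.apply]
  congr
  funext j
  simp [Finset.sum_apply, div_eq_inv_mul]

theorem feat_eq_of_nbhdFinset_eq_of_label_eq (agg : Agg) {G : LabeledGraph α} {v v' : G.V}
    (hn : G.nbhdFinset v = G.nbhdFinset v') (hl : G.label v = G.label v') :
    ∀ ℓ, 𝒢.feat agg G ℓ v = 𝒢.feat agg G ℓ v'
  | 0 => funext fun i => by simp only [GNN.feat, hl]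
  | ℓ + 1 => funext fun i => by
    simp only [GNN.feat, hn, feat_eq_of_nbhdFinset_eq_of_label_eq agg hn hl ℓ]

end GNN

theorem Agg.apply_map {V W : Type} (agg : Agg) (f : V ↪ W) (s : Finset V) (x : W → ℝ) :
    agg.apply (s.map f) x = agg.apply s (x ∘ f) := by
  cases agg <;> simp [Agg.apply, Finset.sup'_map]

namespace LabeledGraph

def IsGeneratedEmbedding {G H : LabeledGraph α} (f : G.V ↪ H.V) : Prop :=
  ∀ x, H.label (f x) = G.label x ∧ H.nbhdFinset (f x) = (G.nbhdFinset x).map f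

namespace IsGeneratedEmbedding

variable [Fintype α] {G H : LabeledGraph α} {f : G.V ↪ H.V}

theorem labelSet_apply (hf : IsGeneratedEmbedding f) (x : G.V) :
    H.labelSet (f x) = G.labelSet x := by
  simp only [labelSet, (hf x).1]

theorem modalType_apply (hf : IsGeneratedEmbedding f) :
    ∀ (j : ℕ) (x : G.V), H.modalType j (f x) = G.modalType j x
  | 0, x => hf.labelSet_apply x
  | j + 1, x => by
    simp only [modalType, hf.labelSet_apply, (hf x).2, Finset.map_eq_image, Finset.image_image,
      Function.comp_def, hf.modalType_apply j]
    rfl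

theorem feat_apply (hf : IsGeneratedEmbedding f) (𝒢 : GNN α) (agg : Agg) :
    ∀ (ℓ : ℕ) (x : G.V), 𝒢.feat agg H ℓ (f x) = 𝒢.feat agg G ℓ x
  | 0, x => funext fun i => by simp only [GNN.feat, (hf x).1]
  | ℓ + 1, x => funext fun i => by
    simp only [GNN.feat, (hf x).2, Agg.apply_map, Function.comp_def, hf.feat_apply 𝒢 agg ℓ]

end IsGeneratedEmbedding

variable [Fintype α] (G₁ G₂ : LabeledGraph α)

noncomputable def pick (m : ℕ) (b : G₂.V) (a : G₁.V) : G₂.V :=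
  if h : ∃ c, G₂.adj b c ∧ ModalType.Le m (G₁.modalType m a) (G₂.modalType m c) then h.choose
  else b

/-- Vertex `(a, b, j, i)` is the `i`-th copy of `a ∈ G₁` on layer `j`, shadowed by `b ∈ G₂`. Its
successors are all copies of `(a', pick b a', j - 1)` for the successors `a'` of `a`, plus the
successors of `b` in a copy of `G₂`. If the depth-`j` type of `b` dominates that of `a`, then
`(a, b, j, i)` has the depth-`j` type of `b`, but with `n` copies the mean over its successors is
dominated by the `G₁`-part as `n → ∞`. -/
@[reducible]
noncomputable def blend (k n : ℕ) : LabeledGraph α where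
  V := (G₁.V × G₂.V × Fin (k + 1) × Fin n) ⊕ G₂.V
  adj
    | .inl (a, b, j, _), .inl (a', b', j', _) =>
        (j : ℕ) = j' + 1 ∧ G₁.adj a a' ∧ b' = pick G₁ G₂ j' b a'
    | .inl (_, b, _, _), .inr b' => G₂.adj b b'
    | .inr _, .inl _ => False
    | .inr b, .inr b' => G₂.adj b b'
  label
    | .inl (a, _, _, _) => G₁.label a
    | .inr b => G₂.label b

variable {G₁ G₂}

theorem pick_spec {m : ℕ} {b : G₂.V} {a : G₁.V}
    (h : ∃ c, G₂.adj b c ∧ ModalType.Le m (G₁.modalType m a) (G₂.modalType m c)) :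
    G₂.adj b (pick G₁ G₂ m b a) ∧
      ModalType.Le m (G₁.modalType m a) (G₂.modalType m (pick G₁ G₂ m b a)) := by
  rw [pick, dif_pos h]
  exact h.choose_spec

theorem exists_pick_of_modalType_le {m : ℕ} {a : G₁.V} {b : G₂.V}
    (h : ModalType.Le (m + 1) (G₁.modalType (m + 1) a) (G₂.modalType (m + 1) b))
    {a' : G₁.V} (ha' : G₁.adj a a') :
    ∃ c, G₂.adj b c ∧ ModalType.Le m (G₁.modalType m a') (G₂.modalType m c) := by
  obtain ⟨_, hy, hle⟩ := h.2.2 _ (Finset.mem_image_of_mem _ (mem_nbhdFinset.mpr ha'))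
  obtain ⟨c, hc, rfl⟩ := Finset.mem_image.mp hy
  exact ⟨c, mem_nbhdFinset.mp hc, hle⟩

variable {k n : ℕ}

@[simp]
theorem blend_adj_inl_inl {a a' : G₁.V} {b b' : G₂.V} {j j' : Fin (k + 1)} {i i' : Fin n} :
    (blend G₁ G₂ k n).adj (.inl (a, b, j, i)) (.inl (a', b', j', i')) ↔
      (j : ℕ) = j' + 1 ∧ G₁.adj a a' ∧ b' = pick G₁ G₂ j' b a' := Iff.rfl

theorem blend_inr_isGeneratedEmbedding :
    IsGeneratedEmbedding (G := G₂) (H := blend G₁ G₂ k n) Function.Embedding.inr := by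
  refine fun b => ⟨rfl, ?_⟩
  ext (_ | _) <;> simp [nbhdFinset]

theorem nbhdFinset_blend_inl_eq (a : G₁.V) (b : G₂.V) (j : Fin (k + 1)) (i i' : Fin n) :
    (blend G₁ G₂ k n).nbhdFinset (.inl (a, b, j, i)) =
      (blend G₁ G₂ k n).nbhdFinset (.inl (a, b, j, i')) := by
  ext (_ | _) <;> simp [nbhdFinset]

noncomputable def blendCopies (m : ℕ) (hm : m < k + 1) (b : G₂.V) :
    G₁.V × Fin n ↪ G₁.V × G₂.V × Fin (k + 1) × Fin n :=
  ⟨fun p => (p.1, pick G₁ G₂ m b p.1, ⟨m, hm⟩, p.2), fun p q h => by simp_all [Prod.ext_iff]⟩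

@[simp]
theorem blendCopies_apply (m : ℕ) (hm : m < k + 1) (b : G₂.V) (p : G₁.V × Fin n) :
    blendCopies m hm b p = (p.1, pick G₁ G₂ m b p.1, ⟨m, hm⟩, p.2) := rfl

theorem nbhdFinset_blend_inl_succ (a : G₁.V) (b : G₂.V) (m : ℕ) (hm : m + 1 < k + 1)
    (i : Fin n) :
    (blend G₁ G₂ k n).nbhdFinset (.inl (a, b, ⟨m + 1, hm⟩, i)) =
      ((G₁.nbhdFinset a ×ˢ Finset.univ).map (blendCopies m (by omega) b)).disjSum
        (G₂.nbhdFinset b) := by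
  ext (⟨a', b', ⟨j', hj'⟩, i'⟩ | b')
  · rw [mem_nbhdFinset, blend_adj_inl_inl]
    simp only [Finset.inl_mem_disjSum, Finset.mem_map, Finset.mem_product, mem_nbhdFinset,
      Finset.mem_univ, and_true, blendCopies_apply, Prod.ext_iff, Fin.ext_iff]
    constructor
    · rintro ⟨hm, hadj, rfl⟩
      obtain rfl : m = j' := by omega
      exact ⟨(a', i'), hadj, rfl, rfl, rfl, rfl⟩
    · rintro ⟨⟨a'', i''⟩, hadj, rfl, rfl, rfl, -⟩
      exact ⟨by omega, hadj, rfl⟩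
  · simp [nbhdFinset]

theorem modalType_blend_inl : ∀ (j : ℕ) (hj : j < k + 1) (a : G₁.V) (b : G₂.V) (i : Fin n),
    ModalType.Le j (G₁.modalType j a) (G₂.modalType j b) →
      (blend G₁ G₂ k n).modalType j (.inl (a, b, ⟨j, hj⟩, i)) = G₂.modalType j b
  | 0, _, _, _, _, hle => hle
  | m + 1, hm, a, b, i, hle => by
    refine Prod.ext hle.1 ?_
    ext y
    simp only [modalType, Finset.mem_image]
    constructor
    · rintro ⟨u, hu, rfl⟩
      rw [nbhdFinset_blend_inl_succ] at hu
      rcases Finset.mem_disjSum.mp hu with ⟨x, hx, rfl⟩ | ⟨b', hb', rfl⟩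
      · obtain ⟨⟨a', i'⟩, hp, rfl⟩ := Finset.mem_map.mp hx
        obtain ⟨hc, hle'⟩ := pick_spec
          (exists_pick_of_modalType_le hle (mem_nbhdFinset.mp (Finset.mem_product.mp hp).1))
        exact ⟨_, mem_nbhdFinset.mpr hc, (modalType_blend_inl m _ a' _ i' hle').symm⟩
      · exact ⟨b', hb', (blend_inr_isGeneratedEmbedding.modalType_apply m b').symm⟩
    · rintro ⟨b', hb', rfl⟩
      refine ⟨.inr b', ?_, blend_inr_isGeneratedEmbedding.modalType_apply m b'⟩
      rw [nbhdFinset_blend_inl_succ]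
      exact Finset.inr_mem_disjSum.mpr hb'

theorem card_nbhdFinset_blend_inl_succ (a : G₁.V) (b : G₂.V) (m : ℕ) (hm : m + 1 < k + 1)
    (i : Fin n) :
    ((blend G₁ G₂ k n).nbhdFinset (.inl (a, b, ⟨m + 1, hm⟩, i))).card =
      (G₁.nbhdFinset a).card * n + (G₂.nbhdFinset b).card := by
  simp [nbhdFinset_blend_inl_succ]

theorem sum_feat_nbhdFinset_blend_inl_succ (𝒢 : GNN α) (agg : Agg) (ℓ : ℕ) (a : G₁.V)
    (b : G₂.V) (m : ℕ) (hm : m + 1 < k + 1) (i : Fin (n + 1)) :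
    ∑ u ∈ (blend G₁ G₂ k (n + 1)).nbhdFinset (.inl (a, b, ⟨m + 1, hm⟩, i)),
        𝒢.feat agg (blend G₁ G₂ k (n + 1)) ℓ u =
      ((n : ℝ) + 1) • ∑ a' ∈ G₁.nbhdFinset a,
          𝒢.feat agg (blend G₁ G₂ k (n + 1)) ℓ (.inl (a', pick G₁ G₂ m b a', ⟨m, by omega⟩, 0)) +
        ∑ b' ∈ G₂.nbhdFinset b, 𝒢.feat agg G₂ ℓ b' := by
  rw [nbhdFinset_blend_inl_succ, Finset.sum_disjSum, Finset.sum_map, Finset.sum_product,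
    Finset.smul_sum]
  congr 1
  · refine Finset.sum_congr rfl fun a' _ => ?_
    have hcopy (i' : Fin (n + 1)) := 𝒢.feat_eq_of_nbhdFinset_eq_of_label_eq agg
      (nbhdFinset_blend_inl_eq (k := k) a' (pick G₁ G₂ m b a') ⟨m, by omega⟩ i' 0) rfl ℓ
    simp only [blendCopies_apply]
    rw [Fintype.sum_congr _ _ hcopy, Finset.sum_const, Finset.card_univ, Fintype.card_fin,
      ← Nat.cast_smul_eq_nsmul ℝ, Nat.cast_succ]
  · exact Finset.sum_congr rfl fun b' _ => blend_inr_isGeneratedEmbedding.feat_apply 𝒢 agg ℓ b'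

end LabeledGraph

/-- The mean of `n + 1` copies of `A` vectors with sum `S n` together with `B` further vectors with
sum `c`. For `A = 0` both sides are `0`, since `0⁻¹ = 0` just as the mean of the empty multiset is
`0`. -/
theorem tendsto_inv_smul_add {E : Type*} [AddCommGroup E] [Module ℝ E] [TopologicalSpace E]
    [ContinuousAdd E] [ContinuousSMul ℝ E] {A B : ℕ} (hAB : A = 0 → B = 0) {S : ℕ → E} {s : E}
    (hS : Tendsto S atTop (𝓝 s)) (c : E) :
    Tendsto (fun n : ℕ => (A * ((n : ℝ) + 1) + B)⁻¹ • (((n : ℝ) + 1) • S n + c)) atTop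
      (𝓝 ((A : ℝ)⁻¹ • s)) := by
  rcases eq_or_ne A 0 with rfl | hA
  · simpa [hAB rfl] using tendsto_const_nhds
  have hε := tendsto_one_div_add_atTop_nhds_zero_nat (𝕜 := ℝ)
  have hden : Tendsto (fun n : ℕ => ((A : ℝ) + B * (1 / ((n : ℝ) + 1)))⁻¹) atTop
      (𝓝 (A : ℝ)⁻¹) := by
    simpa using (tendsto_const_nhds.add (hε.const_mul (B : ℝ))).inv₀ (by simpa using hA)
  have key := (hden.smul hS).add ((hε.mul hden).smul (tendsto_const_nhds (x := c)))
  rw [zero_mul, zero_smul, add_zero] at key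
  refine key.congr fun n => ?_
  have hn : (n : ℝ) + 1 ≠ 0 := by positivity
  rw [smul_add, smul_smul]
  congr 2 <;> field_simp

open LabeledGraph in
theorem GNN.tendsto_feat_blend [Fintype α] (𝒢 : GNN α) (hcont : 𝒢.HasContinuousCom)
    (G₁ G₂ : LabeledGraph α) (k : ℕ) :
    ∀ ℓ ≤ 𝒢.L, ∀ (j : ℕ) (hj : j < k + 1), ℓ ≤ j → ∀ (a : G₁.V) (b : G₂.V),
      ModalType.Le j (G₁.modalType j a) (G₂.modalType j b) →
      Tendsto (fun n : ℕ => 𝒢.feat .mean (blend G₁ G₂ k (n + 1)) ℓ (.inl (a, b, ⟨j, hj⟩, 0)))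
        atTop (𝓝 (𝒢.feat .mean G₁ ℓ a))
  | 0, _, _, _, _, _, _, _ => tendsto_const_nhds
  | ℓ + 1, hℓ, j, hj, hℓj, a, b, hle => by
    obtain ⟨m, rfl⟩ : ∃ m, j = m + 1 := ⟨j - 1, by omega⟩
    have hown := 𝒢.tendsto_feat_blend hcont G₁ G₂ k ℓ (by omega) (m + 1) hj (by omega) a b hle
    have hsum : Tendsto (fun n : ℕ => ∑ a' ∈ G₁.nbhdFinset a, 𝒢.feat .mean (blend G₁ G₂ k (n + 1))
        ℓ (.inl (a', pick G₁ G₂ m b a', ⟨m, by omega⟩, 0))) atTop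
        (𝓝 (∑ a' ∈ G₁.nbhdFinset a, 𝒢.feat .mean G₁ ℓ a')) :=
      tendsto_finsetSum _ fun a' ha' => 𝒢.tendsto_feat_blend hcont G₁ G₂ k ℓ (by omega) m _
        (by omega) a' _ (pick_spec (exists_pick_of_modalType_le hle (mem_nbhdFinset.mp ha'))).2
    have hAB : (G₁.nbhdFinset a).card = 0 → (G₂.nbhdFinset b).card = 0 := by
      simpa only [Finset.card_eq_zero] using nbhdFinset_eq_empty_of_modalType_le hle
    have hmean := tendsto_inv_smul_add hAB hsum (∑ b' ∈ G₂.nbhdFinset b, 𝒢.feat .mean G₂ ℓ b')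
    simp only [feat_succ_mean]
    refine ((hcont ℓ (by omega)).tendsto _).comp (hown.prodMk_nhds (hmean.congr fun n => ?_))
    rw [card_nbhdFinset_blend_inl_succ, sum_feat_nbhdFinset_blend_inl_succ]
    push_cast
    rfl

namespace GNN

variable [Fintype α] (𝒢 : GNN α) {agg : Agg} {G : LabeledGraph α} {v : G.V}
  {H : ℕ → LabeledGraph α} {w : (n : ℕ) → (H n).V}

theorem exists_accepts_of_tendsto (hs : 𝒢.clsStrict = true)
    (hlim : Tendsto (fun n => 𝒢.feat agg (H n) 𝒢.L (w n)) atTop (𝓝 (𝒢.feat agg G 𝒢.L v)))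
    (hacc : 𝒢.accepts agg G v) : ∃ n, 𝒢.accepts agg (H n) (w n) := by
  simp only [accepts, hs, if_true] at hacc ⊢
  exact (((continuous_apply 𝒢.clsIdx).tendsto _).comp hlim |>.eventually (lt_mem_nhds hacc)).exists

theorem accepts_of_tendsto (hs : 𝒢.clsStrict = false)
    (hlim : Tendsto (fun n => 𝒢.feat agg (H n) 𝒢.L (w n)) atTop (𝓝 (𝒢.feat agg G 𝒢.L v)))
    (hacc : ∀ n, 𝒢.accepts agg (H n) (w n)) : 𝒢.accepts agg G v := by
  simp only [accepts, hs, Bool.false_eq_true, if_false] at hacc ⊢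
  exact ge_of_tendsto' (((continuous_apply 𝒢.clsIdx).tendsto _).comp hlim) hacc

end GNN

/-- If a vertex property is defined by some Mean-GNN with continuous
combination functions and also by some ML formula, then it is defined by an AFML
formula. -/
theorem stmt16 {α : Type} [Fintype α] (𝒢 : GNN α) (hcont : 𝒢.HasContinuousCom)
    (ψ : ML α)
    (h : ∀ (G : LabeledGraph α) (v : G.V), 𝒢.accepts Agg.mean G v ↔ ML.sat G ψ v) :
    ∃ φ : AFML α, ∀ (G : LabeledGraph α) (v : G.V),
      𝒢.accepts Agg.mean G v ↔ AFML.sat G φ v := by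
  obtain ⟨p⟩ := ψ.nonempty_atoms
  set k := max ψ.depth 𝒢.L
  have hacc (G₁ : LabeledGraph α) (v₁ : G₁.V) (G₂ : LabeledGraph α) (v₂ : G₂.V)
      (hle : ModalType.Le k (G₁.modalType k v₁) (G₂.modalType k v₂)) (n : ℕ) :
      𝒢.accepts .mean (G₁.blend G₂ k (n + 1)) (.inl (v₁, v₂, ⟨k, k.lt_succ_self⟩, 0)) ↔
        𝒢.accepts .mean G₂ v₂ := by
    rw [h, h]
    exact ψ.sat_iff_of_modalType_eq (le_max_left _ _)
      (LabeledGraph.modalType_blend_inl k _ v₁ v₂ 0 hle)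
  have hlim (G₁ : LabeledGraph α) (v₁ : G₁.V) (G₂ : LabeledGraph α) (v₂ : G₂.V)
      (hle : ModalType.Le k (G₁.modalType k v₁) (G₂.modalType k v₂)) :=
    𝒢.tendsto_feat_blend hcont G₁ G₂ k _ le_rfl k k.lt_succ_self (le_max_right _ _) v₁ v₂ hle
  cases hs : 𝒢.clsStrict
  · obtain ⟨φ, hφ⟩ := AFML1.exists_sat_iff_of_monotone p k (fun G v => ¬ 𝒢.accepts .mean G v)
      fun G₁ v₁ G₂ v₂ hle hrej₁ hacc₂ => hrej₁ <|
        𝒢.accepts_of_tendsto hs (hlim G₁ v₁ G₂ v₂ hle) fun n => (hacc G₁ v₁ G₂ v₂ hle n).mpr hacc₂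
    exact ⟨.inr φ.neg, fun G v => by simp [AFML.sat, hφ]⟩
  · obtain ⟨φ, hφ⟩ := AFML1.exists_sat_iff_of_monotone p k (𝒢.accepts .mean)
      fun G₁ v₁ G₂ v₂ hle hacc₁ =>
        have ⟨n, hn⟩ := 𝒢.exists_accepts_of_tendsto hs (hlim G₁ v₁ G₂ v₂ hle) hacc₁
        (hacc G₁ v₁ G₂ v₂ hle n).mp hn
    exact ⟨.inl φ, fun G v => (hφ G v).symm⟩
end

section
/- For every AFML formula φ over Π there exists a simple Mean-GNN with truncated ReLU activation ReLU*(x) = min(max(0,x),1) (hence with continuous combination functions) that accepts a pointed Π-labeled graph (G,v) if and only if G,v ⊨ φ (uniformly, over all graphs). -/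
open scoped Classical

/-!
Channels of the network carry, for each subformula `ψ` of an AFML[1] formula, a truth degree in
`[0,1]` that is positive exactly where `ψ` holds. Mean aggregation realises `◊` (a mean of
nonnegative numbers is positive iff one of them is), truncated ReLU realises `∨` as
`min (x + y) 1` and `∧` as `min x y = x - ReLU*(x - y)` over two layers, and `□⊥` is one minus
the mean of a constant-one channel. Every channel also feeds its own value back, and `ReLU*`
fixes `[0,1]`, so once a channel is correct it stays correct. An AFML[2] formula is the negation
of its dual AFML[1] formula, so it is accepted iff one minus the degree of the dual is `≥ 1`.
-/

lemma reluStar_mem_Icc (x : ℝ) : reluStar x ∈ Set.Icc 0 1 :=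
  ⟨le_min (le_max_left 0 x) zero_le_one, min_le_right _ _⟩

lemma reluStar_eq_self {x : ℝ} (hx : x ∈ Set.Icc 0 1) : reluStar x = x := by
  simp only [reluStar, max_eq_right hx.1, min_eq_left hx.2]

lemma reluStar_pos_iff {x : ℝ} : 0 < reluStar x ↔ 0 < x := by
  simp only [reluStar, lt_min_iff, lt_max_iff, lt_self_iff_false, false_or, zero_lt_one, and_true]

lemma reluStar_of_nonpos {x : ℝ} (hx : x ≤ 0) : reluStar x = 0 := by
  simp only [reluStar, max_eq_left hx, min_eq_left zero_le_one]

lemma reluStar_sub_reluStar_sub {x y : ℝ} (hx : x ∈ Set.Icc 0 1) (hy : y ∈ Set.Icc 0 1) :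
    reluStar (x - reluStar (x - y)) = min x y := by
  rcases le_total x y with h | h
  · rw [reluStar_of_nonpos (sub_nonpos.2 h), sub_zero, reluStar_eq_self hx, min_eq_left h]
  · rw [reluStar_eq_self ⟨sub_nonneg.2 h, by linarith [hx.2, hy.1]⟩, sub_sub_cancel,
      reluStar_eq_self hy, min_eq_right h]

namespace Agg

variable {V : Type}

lemma mean_apply_mem_Icc {s : Finset V} {x : V → ℝ} (hx : ∀ u ∈ s, x u ∈ Set.Icc 0 1) :
    mean.apply s x ∈ Set.Icc 0 1 := by
  rcases s.eq_empty_or_nonempty with rfl | hs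
  · simp [apply]
  have hcard : (0 : ℝ) < s.card := by exact_mod_cast hs.card_pos
  refine ⟨div_nonneg (Finset.sum_nonneg fun u hu => (hx u hu).1) hcard.le, ?_⟩
  rw [apply, div_le_one hcard]
  simpa using Finset.sum_le_sum fun u hu => (hx u hu).2

lemma mean_apply_pos_iff {s : Finset V} {x : V → ℝ} (hx : ∀ u ∈ s, 0 ≤ x u) :
    0 < mean.apply s x ↔ ∃ u ∈ s, 0 < x u := by
  rw [apply, ← Finset.sum_pos_iff_of_nonneg hx]
  rcases s.eq_empty_or_nonempty with rfl | hs
  · simp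
  · exact div_pos_iff_of_pos_right (by exact_mod_cast hs.card_pos)

lemma mean_apply_one (s : Finset V) :
    mean.apply s (fun _ => 1) = if s.Nonempty then 1 else 0 := by
  rcases s.eq_empty_or_nonempty with rfl | hs
  · simp [apply]
  · simp [apply, hs, hs.card_pos.ne']

end Agg

namespace AFML1

variable {α : Type}

def subformulas : AFML1 α → List (AFML1 α)
  | atom P => [atom P]
  | natom P => [natom P]
  | boxBot => [boxBot]
  | and ψ χ => and ψ χ :: (ψ.subformulas ++ χ.subformulas)
  | or ψ χ => or ψ χ :: (ψ.subformulas ++ χ.subformulas)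
  | dia ψ => dia ψ :: ψ.subformulas

lemma mem_subformulas_self (φ : AFML1 α) : φ ∈ φ.subformulas := by
  cases φ <;> simp [subformulas]

lemma subformulas_subset {φ ψ : AFML1 α} (h : ψ ∈ φ.subformulas) :
    ψ.subformulas ⊆ φ.subformulas := by
  induction φ with
  | atom | natom | boxBot => simp_all [subformulas]
  | and φ₁ φ₂ ih₁ ih₂ | or φ₁ φ₂ ih₁ ih₂ =>
    simp only [subformulas, List.mem_cons, List.mem_append] at h
    rcases h with rfl | h | h
    · exact List.Subset.refl _
    · exact List.Subset.trans (ih₁ h) (by simp [subformulas])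
    · exact List.Subset.trans (ih₂ h) (by simp [subformulas])
  | dia φ₁ ih =>
    simp only [subformulas, List.mem_cons] at h
    rcases h with rfl | h
    · exact List.Subset.refl _
    · exact List.Subset.trans (ih h) (by simp [subformulas])

lemma left_mem_of_and_mem {φ ψ χ : AFML1 α} (h : and ψ χ ∈ φ.subformulas) :
    ψ ∈ φ.subformulas :=
  subformulas_subset h (by simp [subformulas, mem_subformulas_self])

lemma right_mem_of_and_mem {φ ψ χ : AFML1 α} (h : and ψ χ ∈ φ.subformulas) :
    χ ∈ φ.subformulas :=
  subformulas_subset h (by simp [subformulas, mem_subformulas_self])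

lemma left_mem_of_or_mem {φ ψ χ : AFML1 α} (h : or ψ χ ∈ φ.subformulas) :
    ψ ∈ φ.subformulas :=
  subformulas_subset h (by simp [subformulas, mem_subformulas_self])

lemma right_mem_of_or_mem {φ ψ χ : AFML1 α} (h : or ψ χ ∈ φ.subformulas) :
    χ ∈ φ.subformulas :=
  subformulas_subset h (by simp [subformulas, mem_subformulas_self])

lemma mem_of_dia_mem {φ ψ : AFML1 α} (h : dia ψ ∈ φ.subformulas) : ψ ∈ φ.subformulas :=
  subformulas_subset h (by simp [subformulas, mem_subformulas_self])

/-- The number of layers after the first one needed to compute the truth degree. -/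
def level : AFML1 α → ℕ
  | atom _ | natom _ => 0
  | boxBot => 1
  | and ψ χ => max ψ.level χ.level + 2
  | or ψ χ => max ψ.level χ.level + 1
  | dia ψ => ψ.level + 1

noncomputable def truthDegree (G : LabeledGraph α) : AFML1 α → G.V → ℝ
  | atom P, v => if G.label v P then 1 else 0
  | natom P, v => if G.label v P then 0 else 1
  | boxBot, v => if (G.nbhdFinset v).Nonempty then 0 else 1
  | and ψ χ, v => min (ψ.truthDegree G v) (χ.truthDegree G v)
  | or ψ χ, v => reluStar (ψ.truthDegree G v + χ.truthDegree G v)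
  | dia ψ, v => Agg.mean.apply (G.nbhdFinset v) (ψ.truthDegree G)

variable (G : LabeledGraph α)

lemma truthDegree_mem_Icc (φ : AFML1 α) (v : G.V) : φ.truthDegree G v ∈ Set.Icc 0 1 := by
  induction φ generalizing v with
  | atom | natom | boxBot => simp only [truthDegree]; split_ifs <;> norm_num
  | and ψ χ ihψ ihχ => exact ⟨le_min (ihψ v).1 (ihχ v).1, min_le_of_left_le (ihψ v).2⟩
  | or => exact reluStar_mem_Icc _
  | dia ψ ih => exact Agg.mean_apply_mem_Icc fun u _ => ih u

lemma truthDegree_pos_iff (φ : AFML1 α) (v : G.V) : 0 < φ.truthDegree G v ↔ φ.sat G v := by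
  induction φ generalizing v with
  | atom | natom => simp only [truthDegree, sat]; split_ifs <;> simp_all
  | boxBot =>
    simp only [truthDegree, sat, Finset.Nonempty, LabeledGraph.nbhdFinset, Finset.mem_filter,
      Finset.mem_univ, true_and]
    split_ifs with h <;> simp_all
  | and ψ χ ihψ ihχ => simp only [truthDegree, sat, lt_min_iff, ihψ, ihχ]
  | or ψ χ ihψ ihχ =>
    have := (truthDegree_mem_Icc G ψ v).1
    have := (truthDegree_mem_Icc G χ v).1
    rw [truthDegree, reluStar_pos_iff, sat, ← ihψ, ← ihχ]
    constructor
    · contrapose!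
      intro h
      linarith
    · rintro (h | h) <;> linarith
  | dia ψ ih =>
    rw [truthDegree, Agg.mean_apply_pos_iff fun u _ => (truthDegree_mem_Icc G ψ u).1, sat]
    simp [LabeledGraph.nbhdFinset, ih]

end AFML1

namespace AFML2

variable {α : Type}

def dual : AFML2 α → AFML1 α
  | atom P => .natom P
  | natom P => .atom P
  | diaTop => .boxBot
  | and ψ χ => .or ψ.dual χ.dual
  | or ψ χ => .and ψ.dual χ.dual
  | box ψ => .dia ψ.dual

lemma sat_dual (G : LabeledGraph α) (φ : AFML2 α) (v : G.V) : φ.dual.sat G v ↔ ¬ φ.sat G v := by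
  induction φ generalizing v with
  | atom | natom | diaTop => simp [dual, AFML1.sat, sat]
  | and ψ χ ihψ ihχ => simp only [dual, AFML1.sat, sat, ihψ, ihχ, not_and_or]
  | or ψ χ ihψ ihχ => simp only [dual, AFML1.sat, sat, ihψ, ihχ, not_or]
  | box ψ ih => simp only [dual, AFML1.sat, sat, ih, not_forall, exists_prop]

end AFML2

lemma GNN.feat_succ {α : Type} [Fintype α] (𝒢 : GNN α) (agg : Agg) (G : LabeledGraph α) (ℓ : ℕ)
    (v : G.V) : 𝒢.feat agg G (ℓ + 1) v =
      𝒢.com ℓ (𝒢.feat agg G ℓ v) (fun j => agg.apply (G.nbhdFinset v) (𝒢.feat agg G ℓ · j)) :=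
  rfl

/-- Weights of a simple GNN whose first layer reads the labels and whose later layers all use
the same weights on a common set `ι` of channels. -/
structure UniformNet (α ι : Type) where
  inputWeight : ι → α → ℝ
  inputBias : ι → ℝ
  selfWeight : ι → ι → ℝ
  nbrWeight : ι → ι → ℝ
  bias : ι → ℝ

namespace UniformNet

variable {α ι : Type} [Fintype α] [Fintype ι] (N : UniformNet α ι) (f : ℝ → ℝ)

/-- `N.run f G n` is the feature map after the first layer and `n` further layers. -/
noncomputable def run (G : LabeledGraph α) : ℕ → G.V → ι → ℝ
  | 0, v, k => f ((fun P => if G.label v P then 1 else 0) ⬝ᵥ N.inputWeight k + N.inputBias k)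
  | n + 1, v, k => f (run G n v ⬝ᵥ N.selfWeight k +
      (fun j => Agg.mean.apply (G.nbhdFinset v) (run G n · j)) ⬝ᵥ N.nbrWeight k + N.bias k)

def dim (α ι : Type) [Fintype α] [Fintype ι] : ℕ → ℕ
  | 0 => Fintype.card α
  | _ + 1 => Fintype.card ι

noncomputable def toGNN (n : ℕ) (out : ι) (strict : Bool) (thr : ℝ) : GNN α where
  L := n + 1
  δ := dim α ι
  hδ0 := rfl
  com
    | 0 => fun xv xa i =>
      f (∑ j, xv j * N.inputWeight ((Fintype.equivFin ι).symm i) ((Fintype.equivFin α).symm j) +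
        ∑ j, xa j * 0 + N.inputBias ((Fintype.equivFin ι).symm i))
    | _ + 1 => fun xv xa i =>
      f (∑ j, xv j * N.selfWeight ((Fintype.equivFin ι).symm i) ((Fintype.equivFin ι).symm j) +
        ∑ j, xa j * N.nbrWeight ((Fintype.equivFin ι).symm i) ((Fintype.equivFin ι).symm j) +
        N.bias ((Fintype.equivFin ι).symm i))
  clsIdx := Fintype.equivFin ι out
  clsStrict := strict
  clsThr := thr

lemma toGNN_isSimple (n : ℕ) (out : ι) (strict : Bool) (thr : ℝ) :
    (N.toGNN f n out strict thr).IsSimple f := by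
  rintro (_ | ℓ) _
  · exact ⟨_, fun _ _ => 0, _, fun _ _ _ => rfl⟩
  · exact ⟨_, _, _, fun _ _ _ => rfl⟩

lemma feat_toGNN (n : ℕ) (out : ι) (strict : Bool) (thr : ℝ) (G : LabeledGraph α) (m : ℕ)
    (v : G.V) :
    (N.toGNN f n out strict thr).feat Agg.mean G (m + 1) v
      = fun i => N.run f G m v ((Fintype.equivFin ι).symm i) := by
  induction m generalizing v with
  | zero =>
    ext i
    simp only [GNN.feat, run, toGNN, mul_zero, Finset.sum_const_zero, add_zero]
    congr 2
    exact Equiv.sum_comp (Fintype.equivFin α).symm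
      (fun P => (if G.label v P then 1 else 0) * N.inputWeight _ P)
  | succ m ih =>
    ext i
    rw [GNN.feat_succ]
    simp only [ih, run, dotProduct, ← Equiv.sum_comp (Fintype.equivFin ι).symm]
    rfl

lemma accepts_toGNN_iff (n : ℕ) (out : ι) (strict : Bool) (thr : ℝ) (G : LabeledGraph α)
    (v : G.V) : (N.toGNN f n out strict thr).accepts Agg.mean G v ↔
      if strict then thr < N.run f G n v out else thr ≤ N.run f G n v out := by
  have hout : (N.toGNN f n out strict thr).feat Agg.mean G (N.toGNN f n out strict thr).L v
      (N.toGNN f n out strict thr).clsIdx = N.run f G n v out :=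
    (congrFun (N.feat_toGNN f n out strict thr G n v) _).trans (by simp [toGNN])
  simp only [GNN.accepts, hout]
  rfl

end UniformNet

namespace AFML1

variable {α : Type}

/-- Channels of the network for `φ`: for each subformula a main channel carrying its truth
degree and an auxiliary one (carrying `ReLU*(x - y)` for a conjunction), a constant-one channel
and the complement of `φ`. -/
inductive Channel (φ : AFML1 α) : Type
  | one
  | complement
  | main (ψ : {ψ // ψ ∈ φ.subformulas})
  | aux (ψ : {ψ // ψ ∈ φ.subformulas})

namespace Channel

variable {φ : AFML1 α}

def equivSum : Channel φ ≃ Bool ⊕ ({ψ // ψ ∈ φ.subformulas} × Bool) where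
  toFun
    | one => .inl false
    | complement => .inl true
    | main ψ => .inr (ψ, false)
    | aux ψ => .inr (ψ, true)
  invFun
    | .inl false => one
    | .inl true => complement
    | .inr (ψ, false) => main ψ
    | .inr (ψ, true) => aux ψ
  left_inv := by rintro (_ | _ | _ | _) <;> rfl
  right_inv := by rintro ((_ | _) | ⟨_, _ | _⟩) <;> rfl

noncomputable instance : Fintype (Channel φ) := Fintype.ofEquiv _ equivSum.symm

def level : Channel φ → ℕ
  | one => 0
  | complement => φ.level + 1
  | main ψ => ψ.1.level
  | aux ⟨and ψ χ, _⟩ => max ψ.level χ.level + 1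
  | aux _ => 0

noncomputable def target (G : LabeledGraph α) : Channel φ → G.V → ℝ
  | one, _ => 1
  | complement, v => 1 - φ.truthDegree G v
  | main ψ, v => ψ.1.truthDegree G v
  | aux ⟨and ψ χ, _⟩, v => reluStar (ψ.truthDegree G v - χ.truthDegree G v)
  | aux _, _ => 0

end Channel

open Channel

noncomputable def net (φ : AFML1 α) : UniformNet α (Channel φ) where
  inputWeight
    | main ⟨atom P, _⟩ => Pi.single P 1
    | main ⟨natom P, _⟩ => -Pi.single P 1
    | _ => 0
  inputBias
    | one | main ⟨natom _, _⟩ => 1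
    | _ => 0
  selfWeight
    | complement => -Pi.single (main ⟨φ, mem_subformulas_self φ⟩) 1
    | k@(main ⟨atom _, _⟩) | k@(main ⟨natom _, _⟩) => Pi.single k 1
    | main ⟨and ψ χ, h⟩ =>
      Pi.single (main ⟨ψ, left_mem_of_and_mem h⟩) 1 - Pi.single (aux ⟨and ψ χ, h⟩) 1
    | main ⟨or ψ χ, h⟩ =>
      Pi.single (main ⟨ψ, left_mem_of_or_mem h⟩) 1 + Pi.single (main ⟨χ, right_mem_of_or_mem h⟩) 1
    | aux ⟨and ψ χ, h⟩ =>
      Pi.single (main ⟨ψ, left_mem_of_and_mem h⟩) 1 - Pi.single (main ⟨χ, right_mem_of_and_mem h⟩) 1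
    | _ => 0
  nbrWeight
    | main ⟨boxBot, _⟩ => -Pi.single one 1
    | main ⟨dia ψ, h⟩ => Pi.single (main ⟨ψ, mem_of_dia_mem h⟩) 1
    | _ => 0
  bias
    | one | complement | main ⟨boxBot, _⟩ => 1
    | _ => 0

variable [Fintype α] (G : LabeledGraph α) (φ : AFML1 α)

lemma run_zero_eq_target (k : Channel φ) (hk : k.level = 0) (v : G.V) :
    φ.net.run reluStar G 0 v k = k.target G v := by
  rcases k with _ | _ | ⟨_ | _ | _ | _ | _ | _, _⟩ | ⟨_ | _ | _ | _ | _ | _, _⟩ <;>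
    simp only [Channel.level, AFML1.level] at hk <;> (try omega) <;>
    simp only [UniformNet.run, net, target, truthDegree, dotProduct_zero, dotProduct_neg,
      dotProduct_single, mul_one, add_zero, zero_add] <;>
    (try split_ifs) <;> norm_num [reluStar]

lemma run_succ_eq_target (n : ℕ)
    (hn : ∀ k : Channel φ, k.level ≤ n → ∀ v, φ.net.run reluStar G n v k = k.target G v)
    (k : Channel φ) (hk : k.level ≤ n + 1) (v : G.V) :
    φ.net.run reluStar G (n + 1) v k = k.target G v := by
  rw [UniformNet.run]
  generalize φ.net.run reluStar G n = x at hn ⊢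
  rcases k with _ | _ | ⟨_ | _ | _ | ⟨ψ, χ⟩ | ⟨ψ, χ⟩ | ψ, hmem⟩ | ⟨_ | _ | _ | ⟨ψ, χ⟩ | _ | _, hmem⟩ <;>
    simp only [Channel.level, AFML1.level] at hk <;>
    simp only [net, target, dotProduct_zero, dotProduct_neg, dotProduct_add,
      dotProduct_sub, dotProduct_single, mul_one, add_zero, zero_add]
  case complement =>
    rw [hn (main ⟨φ, _⟩) (by simp only [Channel.level]; omega), target, neg_add_eq_sub]
    have hφ := truthDegree_mem_Icc G φ v
    exact reluStar_eq_self ⟨sub_nonneg.2 hφ.2, sub_le_self _ hφ.1⟩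
  case main.atom | main.natom =>
    rw [hn (main ⟨_, hmem⟩) (Nat.zero_le n)]
    exact reluStar_eq_self (truthDegree_mem_Icc G _ v)
  case main.boxBot =>
    simp only [hn one (Nat.zero_le n), target, Agg.mean_apply_one, truthDegree]
    split_ifs <;> norm_num [reluStar]
  case main.and =>
    rw [hn (main ⟨ψ, _⟩) (by simp only [Channel.level]; omega),
      hn (aux ⟨and ψ χ, hmem⟩) (by simp only [Channel.level]; omega)]
    exact reluStar_sub_reluStar_sub (truthDegree_mem_Icc G ψ v) (truthDegree_mem_Icc G χ v)
  case main.or | aux.and =>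
    rw [hn (main ⟨ψ, _⟩) (by simp only [Channel.level]; omega),
      hn (main ⟨χ, _⟩) (by simp only [Channel.level]; omega)]
    rfl
  case main.dia =>
    simp only [hn (main ⟨ψ, _⟩) (by simp only [Channel.level]; omega), target]
    exact reluStar_eq_self (truthDegree_mem_Icc G (dia ψ) v)
  all_goals norm_num [reluStar]

lemma run_eq_target (n : ℕ) (k : Channel φ) (hk : k.level ≤ n) (v : G.V) :
    φ.net.run reluStar G n v k = k.target G v := by
  induction n generalizing k v with
  | zero => exact run_zero_eq_target G φ k (Nat.le_zero.1 hk) v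
  | succ n ih => exact run_succ_eq_target G φ n ih k hk v

end AFML1

/-- For every AFML formula φ there exists a simple Mean-GNN with
truncated ReLU activation that accepts a pointed graph iff it satisfies φ
(uniformly). -/
theorem stmt17 {α : Type} [Fintype α] (φ : AFML α) :
    ∃ 𝒢 : GNN α, 𝒢.IsSimple reluStar ∧
      ∀ (G : LabeledGraph α) (v : G.V), (𝒢.accepts Agg.mean G v ↔ AFML.sat G φ v) := by
  cases φ with
  | inl φ =>
    refine ⟨φ.net.toGNN reluStar φ.level (.main ⟨φ, φ.mem_subformulas_self⟩) true 0,
      UniformNet.toGNN_isSimple _ _ _ _ _ _, fun G v => ?_⟩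
    rw [UniformNet.accepts_toGNN_iff, if_pos rfl, AFML1.run_eq_target G φ φ.level _ le_rfl v]
    exact φ.truthDegree_pos_iff G v
  | inr θ =>
    refine ⟨θ.dual.net.toGNN reluStar (θ.dual.level + 1) .complement false 1,
      UniformNet.toGNN_isSimple _ _ _ _ _ _, fun G v => ?_⟩
    rw [UniformNet.accepts_toGNN_iff, if_neg Bool.false_ne_true,
      AFML1.run_eq_target G θ.dual (θ.dual.level + 1) .complement le_rfl v, AFML1.Channel.target,
      le_sub_self_iff, ← not_lt, AFML1.truthDegree_pos_iff, AFML2.sat_dual, not_not]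
    rfl
end

section
/- Let Π = {P1, P2} and let 𝒫 be the vertex property consisting of all pointed Π-labeled graphs (G,v) such that |{u ∈ N(G,v) : P1 ∈ π(u)}| > |{u ∈ N(G,v) : P2 ∈ π(u)}|. Then: (a) no RML formula defines 𝒫; and (b) there is a simple Mean-GNN with identity activation function (in particular, a Mean-GNN with continuous combination functions) that defines 𝒫. -/
open scoped Classical

/-- The vertex property 'there exist more successors satisfying P1 than successors
satisfying P2', over Π = {P1, P2} (with P1 = 0, P2 = 1). -/
def moreP1thanP2 (G : LabeledGraph (Fin 2)) (v : G.V) : Prop :=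
  {u | G.adj v u ∧ G.label u 1}.ncard < {u | G.adj v u ∧ G.label u 0}.ncard

/-!
(a) Let `G_k` (resp. `H_k`) be the star whose root has `k + 1` (resp. `k`) leaves labelled `{P1}`,
`k` (resp. `k + 1`) leaves labelled `{P2}` and `k²` leaves labelled `{P1, P2}`; the root of `G_k`
has the property and that of `H_k` does not. A leaf satisfies an RML formula according to its
labels alone, so a diamond at the root compares its ratio `r` with the fraction of leaves of some
set of kinds. In `G_k` and `H_k` these fractions either coincide or are `(k + c k²) / (k + 1)²`
and `(k + 1 + c k²) / (k + 1)²` with `c ∈ {0, 1}`: both lie in `(0, 1)` and tend to `c`, so for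
large `k` they lie on the same side of `r`. By induction every formula eventually takes the same
value at the roots of `G_k` and `H_k`.

(b) A single mean layer computes `(#P1-successors - #P2-successors) / #successors`, whose sign
decides the property.
-/

open Filter Finset

namespace LabeledGraph

variable {α T : Type} [Fintype T]

def star (lab : T → α → Prop) (n : T → ℕ) : LabeledGraph α where
  V := Option (Σ t, Fin (n t))
  adj v u := v = none ∧ u ≠ none
  label v := v.elim (fun _ => False) fun x => lab x.1

variable (lab : T → α → Prop) (n : T → ℕ)

lemma star_not_adj_some (x : Σ t, Fin (n t)) (u : (star lab n).V) :
    ¬ (star lab n).adj (some x) u := by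
  simp [star]

lemma ncard_star_root {Q : (star lab n).V → Prop} {S : T → Prop}
    (hQ : ∀ x, Q (some x) ↔ S x.1) :
    {u | (star lab n).adj none u ∧ Q u}.ncard = ∑ t with S t, n t := by
  have hset : {u | (star lab n).adj none u ∧ Q u}
      = (some '' {x | S x.1} : Set (star lab n).V) := by
    ext u
    cases u with
    | none => exact iff_of_false (fun h => h.1.2 rfl) (by rintro ⟨x, -, hx⟩; cases hx)
    | some x => exact ⟨fun h => ⟨x, (hQ x).1 h.2, rfl⟩, by
        rintro ⟨y, hy, hyx⟩; obtain rfl := Option.some_injective _ hyx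
        exact ⟨⟨rfl, Option.some_ne_none _⟩, (hQ y).2 hy⟩⟩
  rw [hset]
  refine (Set.ncard_image_of_injective _ (Option.some_injective _)).trans ?_
  rw [Set.ncard_eq_toFinset_card']
  have : Set.toFinset {x : Σ t, Fin (n t) | S x.1} = (univ.filter S).sigma fun _ => univ := by
    ext x; simp
  rw [this, card_sigma]
  simp

lemma ncard_nbhd_star_root : ((star lab n).nbhd none).ncard = ∑ t, n t := by
  simpa [nbhd] using
    ncard_star_root lab n (Q := fun _ => True) (S := fun _ => True) fun _ => Iff.rfl

lemma nbhd_star_root_nonempty {t : T} (ht : 0 < n t) : ((star lab n).nbhd none).Nonempty :=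
  ⟨some ⟨t, ⟨0, ht⟩⟩, ⟨rfl, Option.some_ne_none _⟩⟩

end LabeledGraph

def RML.satIsolated {α : Type} (ℓ : α → Prop) : RML α → Prop
  | .atom p => ℓ p
  | .neg φ => ¬ φ.satIsolated ℓ
  | .or φ ψ => φ.satIsolated ℓ ∨ ψ.satIsolated ℓ
  | .diaGe _ _ => True
  | .diaGt _ _ => False

lemma RML.sat_iff_satIsolated {α : Type} {G : LabeledGraph α} {v : G.V} (hv : ∀ u, ¬ G.adj v u)
    (φ : RML α) : RML.sat G φ v ↔ φ.satIsolated (G.label v) := by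
  have hN : ¬ (G.nbhd v).Nonempty := fun ⟨u, hu⟩ => hv u hu
  induction φ with
  | atom p => rfl
  | neg φ ih => exact not_congr ih
  | or φ ψ ih₁ ih₂ => exact or_congr ih₁ ih₂
  | diaGe r φ _ => exact iff_of_true (fun h => absurd h hN) trivial
  | diaGt r φ _ => exact iff_of_false (fun h => hN h.1) id

noncomputable def kindRatio {T : Type} [Fintype T] (n : T → ℕ) (S : T → Prop) : ℝ :=
  (∑ t with S t, n t : ℕ) / (∑ t, n t : ℕ)

lemma LabeledGraph.ratio_star_root {α T : Type} [Fintype T] (lab : T → α → Prop)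
    (n : T → ℕ) (ψ : RML α) :
    ({u | (star lab n).adj none u ∧ RML.sat (star lab n) ψ u}.ncard : ℝ)
        / ((star lab n).nbhd none).ncard
      = kindRatio n fun t => ψ.satIsolated (lab t) := by
  rw [ncard_star_root lab n (S := fun t => ψ.satIsolated (lab t))
      fun x => RML.sat_iff_satIsolated (star_not_adj_some lab n x) ψ,
    ncard_nbhd_star_root]
  rfl

lemma kindRatio_fin3 (a b c : ℕ) (S : Fin 3 → Prop) :
    kindRatio ![a, b, c] S
      = ((if S 0 then (a : ℝ) else 0) + (if S 1 then (b : ℝ) else 0)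
          + (if S 2 then (c : ℝ) else 0)) / (a + b + c) := by
  simp [kindRatio, sum_filter, Fin.sum_univ_three, apply_ite (Nat.cast : ℕ → ℝ)]

lemma threshold_iff_of_notMem_Icc {r x y : ℝ} (hxy : x ≤ y) (hr : r ∉ Set.Icc x y) :
    (r ≤ x ↔ r ≤ y) ∧ (r < x ↔ r < y) := by
  rw [Set.mem_Icc, not_and_or, not_le, not_le] at hr
  rcases hr with hr | hr <;> constructor <;> constructor <;> intro <;> linarith

lemma eventually_notMem_Icc_div_succ_sq (r : ℝ) (c : Prop) [Decidable c] :
    ∀ᶠ k : ℕ in atTop,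
      r ∉ Set.Icc (((k : ℝ) + if c then (k : ℝ) * k else 0) / ((k : ℝ) + 1) ^ 2)
      (((k : ℝ) + 1 + if c then (k : ℝ) * k else 0) / ((k : ℝ) + 1) ^ 2) := by
  have hk1 : ∀ k : ℕ, 1 ≤ k → (0 : ℝ) < k := fun k hk => by exact_mod_cast hk
  by_cases hc : c
  · simp only [if_pos hc]
    rcases lt_or_ge r 1 with hr | hr
    · filter_upwards [(tendsto_natCast_div_add_atTop (1 : ℝ)).eventually (lt_mem_nhds hr)]
        with k hk
      have hx : ((k : ℝ) + k * k) / ((k : ℝ) + 1) ^ 2 = k / (k + 1) := by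
        field_simp; ring
      exact fun h => (h.1.trans_lt' (hx ▸ hk)).false
    · filter_upwards [eventually_ge_atTop 1] with k hk
      refine fun h => (h.2.trans_lt ?_).not_ge hr
      rw [div_lt_one (by positivity)]
      nlinarith [hk1 k hk]
  · simp only [if_neg hc, add_zero]
    rcases le_or_gt r 0 with hr | hr
    · filter_upwards [eventually_ge_atTop 1] with k hk
      exact fun h => (h.1.trans hr).not_gt (div_pos (hk1 k hk) (by positivity))
    · filter_upwards [tendsto_one_div_add_atTop_nhds_zero_nat.eventually (gt_mem_nhds hr)]
        with k hk
      have hy : ((k : ℝ) + 1) / ((k : ℝ) + 1) ^ 2 = 1 / (k + 1) := by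
        field_simp
      exact fun h => (h.2.trans_lt (hy ▸ hk)).false

lemma eventually_threshold_iff_kindRatio (r : ℝ) (S : Fin 3 → Prop) :
    ∀ᶠ k : ℕ in atTop,
      (r ≤ kindRatio ![k + 1, k, k * k] S ↔ r ≤ kindRatio ![k, k + 1, k * k] S) ∧
      (r < kindRatio ![k + 1, k, k * k] S ↔ r < kindRatio ![k, k + 1, k * k] S) := by
  filter_upwards [eventually_notMem_Icc_div_succ_sq r (S 2)] with k hk
  have hxy : ((k : ℝ) + if S 2 then (k : ℝ) * k else 0) / ((k : ℝ) + 1) ^ 2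
      ≤ ((k : ℝ) + 1 + if S 2 then (k : ℝ) * k else 0) / ((k : ℝ) + 1) ^ 2 := by
    gcongr; linarith
  have hden₁ : ((k + 1 : ℕ) : ℝ) + k + (k * k : ℕ) = ((k : ℝ) + 1) ^ 2 := by
    push_cast; ring
  have hden₂ : (k : ℝ) + (k + 1 : ℕ) + (k * k : ℕ) = ((k : ℝ) + 1) ^ 2 := by
    push_cast; ring
  rw [kindRatio_fin3, kindRatio_fin3, hden₁, hden₂]
  by_cases h0 : S 0 <;> by_cases h1 : S 1 <;>
    simp only [h0, h1, if_true, if_false, zero_add, add_zero, and_true, Nat.cast_add, Nat.cast_one,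
      Nat.cast_mul]
  · rw [add_right_comm (k : ℝ) 1 k, add_assoc (k : ℝ)]
    exact ⟨Iff.rfl, Iff.rfl⟩
  · exact (threshold_iff_of_notMem_Icc hxy hk).imp Iff.symm Iff.symm
  · exact threshold_iff_of_notMem_Icc hxy hk

def kindLabel : Fin 3 → Fin 2 → Prop := ![(· = 0), (· = 1), fun _ => True]

open LabeledGraph in
lemma eventually_sat_star_iff (φ : RML (Fin 2)) :
    ∀ᶠ k : ℕ in atTop, RML.sat (star kindLabel ![k + 1, k, k * k]) φ none ↔
      RML.sat (star kindLabel ![k, k + 1, k * k]) φ none := by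
  induction φ with
  | atom p => exact Eventually.of_forall fun _ => Iff.rfl
  | neg φ ih => exact ih.mono fun _ => not_congr
  | or φ ψ ih₁ ih₂ => exact (ih₁.and ih₂).mono fun _ h => or_congr h.1 h.2
  | diaGe r ψ _ =>
    filter_upwards [eventually_threshold_iff_kindRatio r fun t => ψ.satIsolated (kindLabel t)]
      with k hk
    simp only [RML.sat]
    rw [ratio_star_root, ratio_star_root,
      iff_true_intro (nbhd_star_root_nonempty _ _ (t := 0) k.succ_pos),
      iff_true_intro (nbhd_star_root_nonempty _ _ (t := 1) k.succ_pos), true_imp_iff, true_imp_iff]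
    exact hk.1
  | diaGt r ψ _ =>
    filter_upwards [eventually_threshold_iff_kindRatio r fun t => ψ.satIsolated (kindLabel t)]
      with k hk
    simp only [RML.sat]
    rw [ratio_star_root, ratio_star_root,
      iff_true_intro (nbhd_star_root_nonempty _ _ (t := 0) k.succ_pos),
      iff_true_intro (nbhd_star_root_nonempty _ _ (t := 1) k.succ_pos), true_and, true_and]
    exact hk.2

lemma LabeledGraph.moreP1thanP2_star_root_iff {T : Type} [Fintype T] (lab : T → Fin 2 → Prop)
    (n : T → ℕ) :
    moreP1thanP2 (star lab n) none ↔ ∑ t with lab t 1, n t < ∑ t with lab t 0, n t := by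
  unfold moreP1thanP2
  rw [ncard_star_root lab n (S := (lab · 1)) fun _ => Iff.rfl,
    ncard_star_root lab n (S := (lab · 0)) fun _ => Iff.rfl]

open LabeledGraph in
theorem not_exists_rml_iff_moreP1thanP2 :
    ¬ ∃ φ : RML (Fin 2), ∀ (G : LabeledGraph (Fin 2)) (v : G.V),
      RML.sat G φ v ↔ moreP1thanP2 G v := by
  rintro ⟨φ, hφ⟩
  obtain ⟨k, hk⟩ := (eventually_sat_star_iff φ).exists
  have hG : moreP1thanP2 (star kindLabel ![k + 1, k, k * k]) none := by
    simp [moreP1thanP2_star_root_iff, sum_filter, Fin.sum_univ_three, kindLabel]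
  have hH : ¬ moreP1thanP2 (star kindLabel ![k, k + 1, k * k]) none := by
    simp [moreP1thanP2_star_root_iff, sum_filter, Fin.sum_univ_three, kindLabel]
  exact hH ((hφ _ _).1 (hk.1 ((hφ _ _).2 hG)))

lemma LabeledGraph.ncard_adj_label_eq_card_filter {α : Type} (G : LabeledGraph α) (v : G.V)
    (a : α) :
    {u | G.adj v u ∧ G.label u a}.ncard = ((G.nbhdFinset v).filter (G.label · a)).card := by
  rw [← Set.ncard_coe_finset]
  congr 1
  ext u
  simp [LabeledGraph.nbhdFinset]

section CountComparison

variable {α : Type} [Fintype α]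

noncomputable def labelWeight (p q a : α) : ℝ :=
  (if a = p then 1 else 0) - (if a = q then 1 else 0)

/- Feature index `j` of layer 0 stands for the label `(Fintype.equivFin α).symm j`, so the single
layer outputs `(#p-successors - #q-successors) / #successors`. -/
noncomputable def countComparisonGNN (p q : α) : GNN α where
  L := 1
  δ
    | 0 => Fintype.card α
    | _ + 1 => 1
  hδ0 := rfl
  com
    | 0 => fun _ xa _ => ∑ j, xa j * labelWeight p q ((Fintype.equivFin α).symm j)
    | _ + 1 => fun _ _ _ => 0
  clsIdx := (0 : Fin 1)
  clsStrict := true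
  clsThr := 0

variable (p q : α)

lemma countComparisonGNN_isSimple : (countComparisonGNN p q).IsSimple fun x => x := by
  intro ℓ hℓ
  obtain rfl : ℓ = 0 := Nat.lt_one_iff.1 hℓ
  refine ⟨0, fun j _ => labelWeight p q ((Fintype.equivFin α).symm j), 0, fun xv xa i => ?_⟩
  simp only [Pi.zero_apply, mul_zero, sum_const_zero, zero_add, add_zero]
  rfl

lemma countComparisonGNN_feat (G : LabeledGraph α) (v : G.V) :
    (countComparisonGNN p q).feat .mean G 1 v (0 : Fin 1)
      = (((G.nbhdFinset v).filter (G.label · p)).card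
          - ((G.nbhdFinset v).filter (G.label · q)).card : ℝ) / (G.nbhdFinset v).card := by
  show ∑ j, (∑ u ∈ G.nbhdFinset v,
      (if G.label u ((Fintype.equivFin α).symm j) then (1 : ℝ) else 0)) / (G.nbhdFinset v).card *
      labelWeight p q ((Fintype.equivFin α).symm j) = _
  rw [Equiv.sum_comp (Fintype.equivFin α).symm fun a => (∑ u ∈ G.nbhdFinset v,
      (if G.label u a then (1 : ℝ) else 0)) / (G.nbhdFinset v).card * labelWeight p q a]
  simp [labelWeight, mul_sub, sum_sub_distrib, sub_div]

lemma countComparisonGNN_accepts_iff (G : LabeledGraph α) (v : G.V) :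
    (countComparisonGNN p q).accepts .mean G v ↔
      {u | G.adj v u ∧ G.label u q}.ncard < {u | G.adj v u ∧ G.label u p}.ncard := by
  change 0 < (countComparisonGNN p q).feat .mean G 1 v (0 : Fin 1) ↔ _
  rw [countComparisonGNN_feat, G.ncard_adj_label_eq_card_filter, G.ncard_adj_label_eq_card_filter]
  have hp : ((G.nbhdFinset v).filter (G.label · p)).card ≤ (G.nbhdFinset v).card :=
    card_filter_le _ _
  constructor
  · intro h
    rcases div_pos_iff.1 h with ⟨h, -⟩ | ⟨-, h⟩
    · exact_mod_cast sub_pos.1 h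
    · exact absurd h (Nat.cast_nonneg _).not_gt
  · intro h
    exact div_pos (sub_pos.2 (by exact_mod_cast h))
      (by exact_mod_cast (Nat.zero_le _).trans_lt (h.trans_le hp))

end CountComparison

/-- (a) no RML formula defines the property 'more successors satisfy
P1 than P2'; (b) a simple Mean-GNN with identity activation (hence with continuous
combination functions) defines it. -/
theorem stmt18 :
    (¬ ∃ φ : RML (Fin 2), ∀ (G : LabeledGraph (Fin 2)) (v : G.V),
        RML.sat G φ v ↔ moreP1thanP2 G v) ∧
    (∃ 𝒢 : GNN (Fin 2), 𝒢.IsSimple (fun x => x) ∧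
        ∀ (G : LabeledGraph (Fin 2)) (v : G.V),
          𝒢.accepts Agg.mean G v ↔ moreP1thanP2 G v) :=
  ⟨not_exists_rml_iff_moreP1thanP2, countComparisonGNN 0 1, countComparisonGNN_isSimple 0 1,
    countComparisonGNN_accepts_iff 0 1⟩
end

section
/- Let Π = {P}. There is no Mean-GNN all of whose combination functions are continuous that accepts a pointed Π-labeled graph (G,v) if and only if G,v ⊨ ◊^{>1/2}◊^{>1/2}P. That is, the RML formula ◊^{>1/2}◊^{>1/2}P is not expressible by any Mean-GNN with continuous combination functions. -/
open scoped Classical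

/-!
On a two-level tree whose root has children with label ratios `ρᵢ` among their leaves, a
Mean-GNN computes at the root a continuous function of the average of the children's hidden
feature vectors `φ(ρᵢ)`, and acceptance is an open (strict threshold) or a closed (non-strict
threshold) condition on that average, while the formula asks for a strict majority of children
with `ρᵢ > 1/2`. Children with `ρ = (s + 1) / (2s + 1)` have `φ(ρ) → φ(1/2)`, so single majority
children approximate a single child of ratio `1/2`, which rules out a closed condition. For an
open one, work in the finite-dimensional span of the `φ(ρₛ) - φ(1/2)`: the centroid `c` of an
affine basis taken among them lies in the interior of their convex hull, hence so does
`c + (φ(ρⱼ) - φ(1/2))/2` for large `j`. This produces a configuration with a three-quarter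
majority whose average is a limit of averages of configurations in which the majority children
make up only half.
-/

open Filter Topology Set

section ConvexHull
variable {ι E : Type*} [NormedAddCommGroup E] [NormedSpace ℝ E]

lemma exists_tendsto_multiset_sum_of_mem_convexHull {v : ι → E} {y : E}
    (hy : y ∈ convexHull ℝ (range v)) :
    ∃ N : ℕ → Multiset ι, (∀ r, Multiset.card (N r) ≤ r) ∧
      Tendsto (fun r : ℕ => (r : ℝ)⁻¹ • ((N r).map v).sum) atTop (𝓝 y) := by
  rw [convexHull_range_eq_exists_affineCombination] at hy
  obtain ⟨t, w, hw0, hw1, rfl⟩ := hy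
  refine ⟨fun r => t.val.bind fun i => Multiset.replicate ⌊w i * r⌋₊ i, fun r => ?_, ?_⟩
  · have : ∑ i ∈ t, (⌊w i * r⌋₊ : ℝ) ≤ r :=
      calc ∑ i ∈ t, (⌊w i * r⌋₊ : ℝ) ≤ ∑ i ∈ t, w i * r :=
            Finset.sum_le_sum fun i hi => Nat.floor_le (by have := hw0 i hi; positivity)
        _ = r := by rw [← Finset.sum_mul, hw1, one_mul]
    simpa [Multiset.card_bind] using (by exact_mod_cast this : ∑ i ∈ t, ⌊w i * r⌋₊ ≤ r)
  · rw [t.affineCombination_eq_linear_combination _ _ hw1]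
    refine (tendsto_finsetSum t fun i hi =>
      ((tendsto_nat_floor_mul_div_atTop (hw0 i hi)).comp tendsto_natCast_atTop_atTop).smul_const
        (v i)).congr fun r => ?_
    simp [Multiset.map_bind, Multiset.sum_bind, Finset.smul_sum, smul_smul, div_eq_inv_mul,
      ← Nat.cast_smul_eq_nsmul ℝ]

variable [FiniteDimensional ℝ E]

lemma exists_centroid_mem_interior_convexHull {v : ι → E} (hv : affineSpan ℝ (range v) = ⊤) :
    ∃ s : Finset ι, s.Nonempty ∧
      (s.card : ℝ)⁻¹ • ∑ i ∈ s, v i ∈ interior (convexHull ℝ (range v)) := by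
  obtain ⟨t, hts, b, hb⟩ := AffineBasis.exists_affine_subbasis hv
  have := b.finite_set.fintype
  have := b.nonempty
  choose sel hsel using fun x : t => hts x.2
  have hinj : Function.Injective sel := fun x y h =>
    Subtype.ext ((hsel x).symm.trans (h ▸ hsel y))
  refine ⟨Finset.univ.map ⟨sel, hinj⟩, Finset.univ_nonempty.map, ?_⟩
  have hcen := b.centroid_mem_interior_convexHull
  rw [Finset.centroid_def, Finset.affineCombination_eq_linear_combination _ _ _
    (Finset.sum_centroidWeights_eq_one_of_nonempty ℝ _ Finset.univ_nonempty)] at hcen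
  have hsub : range b ⊆ range v := by rw [hb, Subtype.range_coe]; exact hts
  refine interior_mono (convexHull_mono hsub) ?_
  simpa [Finset.sum_map, hsel, hb, Finset.smul_sum] using hcen

lemma affineSpan_range_eq_top_of_tendsto {l : Filter ι} [l.NeBot] {v : ι → E}
    (hv : Tendsto v l (𝓝 0)) (hspan : Submodule.span ℝ (range v) = ⊤) :
    affineSpan ℝ (range v) = ⊤ := by
  have h0 : (0 : E) ∈ affineSpan ℝ (range v) :=
    (AffineSubspace.closed_of_finiteDimensional _).mem_of_tendsto hv
      (Eventually.of_forall fun i => subset_affineSpan ℝ _ (mem_range_self i))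
  rw [← AffineSubspace.direction_eq_top_iff_of_nonempty ⟨0, h0⟩, eq_top_iff, ← hspan,
    Submodule.span_le]
  rintro _ ⟨i, rfl⟩
  simpa using AffineSubspace.vsub_mem_direction (subset_affineSpan ℝ _ (mem_range_self i)) h0

lemma exists_centroid_add_smul_mem_convexHull {l : Filter ι} [l.NeBot] {v : ι → E}
    (hv : Tendsto v l (𝓝 0)) (c : ℝ) :
    ∃ s : Finset ι, s.Nonempty ∧ ∃ j,
      (s.card : ℝ)⁻¹ • ∑ i ∈ s, v i + c • v j ∈ convexHull ℝ (range v) := by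
  set W := Submodule.span ℝ (range v)
  let w : ι → W := fun i => ⟨v i, Submodule.subset_span (mem_range_self i)⟩
  have hwv : W.subtype ∘ w = v := rfl
  have hw : Tendsto w l (𝓝 0) := tendsto_subtype_rng.2 hv
  have hrange : range w = ((↑) : W → E) ⁻¹' range v := by
    ext x
    simp [w, Subtype.ext_iff]
  obtain ⟨s, hs, hint⟩ := exists_centroid_mem_interior_convexHull
    (affineSpan_range_eq_top_of_tendsto hw (by rw [hrange, Submodule.span_span_coe_preimage]))
  have hlim : Tendsto (fun j => (s.card : ℝ)⁻¹ • ∑ i ∈ s, w i + c • w j) l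
      (𝓝 ((s.card : ℝ)⁻¹ • ∑ i ∈ s, w i)) := by
    simpa using tendsto_const_nhds.add (hw.const_smul c)
  obtain ⟨j, hj⟩ := (hlim.eventually (isOpen_interior.mem_nhds hint)).exists
  refine ⟨s, hs, j, ?_⟩
  have := mem_image_of_mem W.subtype (interior_subset hj)
  rw [LinearMap.image_convexHull, ← range_comp, hwv] at this
  simpa [w, Submodule.coe_sum] using this

end ConvexHull

section Majority
variable {ι E : Type*} [NormedAddCommGroup E] [NormedSpace ℝ E] {U : Set E} {x₀ : E} {v : ι → E}

/-- The average of `b` copies of `x₀` and of the points `x₀ + v i`, `i ∈ N`. -/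
noncomputable def mixture (x₀ : E) (v : ι → E) (N : Multiset ι) (b : ℕ) : E :=
  x₀ + ((Multiset.card N + b : ℕ) : ℝ)⁻¹ • (N.map v).sum

lemma mixture_sub_eq (x₀ : E) (f : ι → E) (N : Multiset ι) (b : ℕ)
    (hNb : 0 < Multiset.card N + b) :
    mixture x₀ (fun i => f i - x₀) N b =
      ((Multiset.card N + b : ℕ) : ℝ)⁻¹ • ((N.map f).sum + b • x₀) := by
  have : ((Multiset.card N + b : ℕ) : ℝ) ≠ 0 := by exact_mod_cast hNb.ne'
  rw [mixture, Multiset.sum_map_sub, Multiset.map_const', Multiset.sum_replicate]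
  push_cast at this ⊢
  match_scalars
  · field_simp
    ring
  · field_simp

lemma mixture_eq_of_card_add_eq {N : Multiset ι} {b r : ℕ} (h : Multiset.card N + b = 2 * r) :
    mixture x₀ v N b = x₀ + (2⁻¹ : ℝ) • ((r : ℝ)⁻¹ • (N.map v).sum) := by
  rw [mixture, h, smul_smul]
  push_cast
  ring_nf

lemma mixture_two_nsmul_add_replicate {s : Finset ι} (hs : s.Nonempty) (j : ι) :
    mixture x₀ v (2 • s.val + Multiset.replicate s.card j) s.card =
      x₀ + (2⁻¹ : ℝ) • ((s.card : ℝ)⁻¹ • ∑ i ∈ s, v i + (2⁻¹ : ℝ) • v j) := by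
  have : (s.card : ℝ) ≠ 0 := by exact_mod_cast hs.card_pos.ne'
  simp only [mixture, Multiset.card_add, Multiset.card_nsmul, Multiset.card_replicate,
    Multiset.map_add, Multiset.map_nsmul, Multiset.map_replicate, Multiset.sum_add,
    Multiset.sum_nsmul, Multiset.sum_replicate, Finset.card_val, Finset.sum_map_val]
  match_scalars <;> field_simp <;> ring

def SeparatesMajority (U : Set E) (x₀ : E) (v : ι → E) : Prop :=
  ∀ N b, 0 < Multiset.card N + b → (mixture x₀ v N b ∈ U ↔ b < Multiset.card N)

theorem SeparatesMajority.not_isClosed {l : Filter ι} [l.NeBot] (hv : Tendsto v l (𝓝 0))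
    (hU : SeparatesMajority U x₀ v) : ¬ IsClosed U := by
  intro hc
  have hsingle : ∀ i, x₀ + v i ∈ U := fun i => by
    simpa [mixture] using (hU {i} 0 (by simp)).2 (by simp)
  have hx₀ : x₀ ∈ U :=
    hc.mem_of_tendsto (by simpa using tendsto_const_nhds.add hv) (Eventually.of_forall hsingle)
  simpa using (hU 0 1 (by simp)).1 (by simpa [mixture] using hx₀)

theorem SeparatesMajority.not_isOpen [FiniteDimensional ℝ E] {l : Filter ι} [l.NeBot]
    (hv : Tendsto v l (𝓝 0)) (hU : SeparatesMajority U x₀ v) : ¬ IsOpen U := by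
  intro ho
  obtain ⟨s, hs, j, hy⟩ := exists_centroid_add_smul_mem_convexHull hv (2⁻¹ : ℝ)
  obtain ⟨N, hN, hlim⟩ := exists_tendsto_multiset_sum_of_mem_convexHull hy
  have hm := hs.card_pos
  have hT := (hU (2 • s.val + Multiset.replicate s.card j) s.card (by positivity)).2 (by
    simp only [Multiset.card_add, Multiset.card_nsmul, Multiset.card_replicate, Finset.card_val]
    omega)
  rw [mixture_two_nsmul_add_replicate hs] at hT
  obtain ⟨r, hmem, hr⟩ := (((tendsto_const_nhds.add (hlim.const_smul (2⁻¹ : ℝ))).eventually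
    (ho.mem_nhds hT)).and (eventually_gt_atTop 0)).exists
  have hcard := hN r
  rw [← mixture_eq_of_card_add_eq (b := 2 * r - Multiset.card (N r)) (by omega)] at hmem
  have := (hU _ _ (by omega)).1 hmem
  omega

end Majority

namespace LabeledGraph
variable {α κ : Type} [Fintype κ] {G : LabeledGraph α} {v : G.V} (f : κ ↪ G.V)

lemma nbhdFinset_eq_map (hf : ∀ u, G.adj v u ↔ u ∈ range f) :
    G.nbhdFinset v = Finset.univ.map f := by
  ext u
  simp [nbhdFinset, hf]

lemma ncard_setOf_adj_and (hf : ∀ u, G.adj v u ↔ u ∈ range f) (P : G.V → Prop) :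
    {u | G.adj v u ∧ P u}.ncard = (Finset.univ.filter fun k => P (f k)).card := by
  have : {u | G.adj v u ∧ P u} = f '' {k | P (f k)} := by
    ext u
    simp only [hf, mem_ofPred_eq, mem_range, mem_image]
    constructor
    · rintro ⟨⟨k, rfl⟩, hk⟩
      exact ⟨k, hk, rfl⟩
    · rintro ⟨k, hk, rfl⟩
      exact ⟨⟨k, rfl⟩, hk⟩
  rw [this, ncard_image_of_injective _ f.injective, ncard_eq_toFinset_card', toFinset_ofPred]

end LabeledGraph

lemma RML.sat_diaGt_half_iff {α κ : Type} [Fintype κ] {G : LabeledGraph α} {v : G.V}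
    (f : κ ↪ G.V) (hf : ∀ u, G.adj v u ↔ u ∈ range f) (φ : RML α) :
    RML.sat G (.diaGt half φ) v ↔
      Fintype.card κ < 2 * (Finset.univ.filter fun k => RML.sat G φ (f k)).card := by
  have hnbhd : (G.nbhd v).ncard = Fintype.card κ := by
    simpa [LabeledGraph.nbhd] using G.ncard_setOf_adj_and f hf (fun _ => True)
  have hle := Finset.card_filter_le Finset.univ fun k => RML.sat G φ (f k)
  rw [Finset.card_univ] at hle
  have hne : (G.nbhd v).Nonempty ↔ 0 < Fintype.card κ := by
    rw [← hnbhd, Set.ncard_pos (Set.toFinite _)]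
  simp only [RML.sat, G.ncard_setOf_adj_and f hf, hnbhd, hne, half]
  rcases (Fintype.card κ).eq_zero_or_pos with h0 | hpos
  · simp only [h0, lt_irrefl, false_and, false_iff, not_lt]
    omega
  · rw [and_iff_right hpos, div_lt_div_iff₀ two_pos (by exact_mod_cast hpos)]
    norm_cast
    omega

namespace GNN
variable {α : Type} [Fintype α] (𝒢 : GNN α)

abbrev Hidden : Type := (ℓ : Fin 𝒢.L) → Fin (𝒢.δ ℓ) → ℝ

/-- The features of a vertex with input `x` receiving the aggregated message `a ℓ` at each
layer `ℓ < L`. -/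
noncomputable def featFrom (x : Fin (𝒢.δ 0) → ℝ) (a : 𝒢.Hidden) : (ℓ : ℕ) → Fin (𝒢.δ ℓ) → ℝ
  | 0 => x
  | ℓ + 1 => 𝒢.com ℓ (featFrom x a ℓ) (if h : ℓ < 𝒢.L then a ⟨ℓ, h⟩ else 0)

noncomputable def hidden (agg : Agg) (G : LabeledGraph α) (v : G.V) : 𝒢.Hidden :=
  fun ℓ => 𝒢.feat agg G ℓ v

def Cls (y : Fin (𝒢.δ 𝒢.L) → ℝ) : Prop :=
  if 𝒢.clsStrict then 𝒢.clsThr < y 𝒢.clsIdx else 𝒢.clsThr ≤ y 𝒢.clsIdx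

lemma accepts_iff_cls (agg : Agg) (G : LabeledGraph α) (v : G.V) :
    𝒢.accepts agg G v ↔ 𝒢.Cls (𝒢.feat agg G 𝒢.L v) := Iff.rfl

lemma isOpen_or_isClosed_setOf_cls : IsOpen {y | 𝒢.Cls y} ∨ IsClosed {y | 𝒢.Cls y} := by
  unfold Cls
  cases 𝒢.clsStrict
  · exact Or.inr (isClosed_le continuous_const (continuous_apply _))
  · exact Or.inl (isOpen_lt continuous_const (continuous_apply _))

variable {𝒢}

lemma feat_eq_featFrom {agg : Agg} {G : LabeledGraph α} {v : G.V} {a : 𝒢.Hidden}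
    (ha : ∀ ℓ : Fin 𝒢.L,
      (fun k => agg.apply (G.nbhdFinset v) (fun u => 𝒢.feat agg G ℓ u k)) = a ℓ) :
    ∀ n ≤ 𝒢.L, 𝒢.feat agg G n v = 𝒢.featFrom (𝒢.feat agg G 0 v) a n
  | 0, _ => rfl
  | n + 1, h => by
    funext i
    rw [featFrom, dif_pos (show n < 𝒢.L by omega), ← ha ⟨n, by omega⟩,
      ← feat_eq_featFrom ha n (by omega)]
    rfl

lemma feat_eq_featFrom_of_nbhdFinset_eq_empty {agg : Agg} {G : LabeledGraph α} {v : G.V}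
    (hv : G.nbhdFinset v = ∅) :
    ∀ n ≤ 𝒢.L, 𝒢.feat agg G n v = 𝒢.featFrom (𝒢.feat agg G 0 v) 0 n :=
  feat_eq_featFrom fun ℓ => by
    funext k
    cases agg <;> simp [hv, Agg.apply]

lemma feat_mean_eq_featFrom {κ : Type} [Fintype κ] {G : LabeledGraph α} {v : G.V} (f : κ ↪ G.V)
    (hv : G.nbhdFinset v = Finset.univ.map f) :
    ∀ n ≤ 𝒢.L, 𝒢.feat .mean G n v =
      𝒢.featFrom (𝒢.feat .mean G 0 v) ((Fintype.card κ : ℝ)⁻¹ • ∑ c, 𝒢.hidden .mean G (f c)) n :=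
  feat_eq_featFrom fun ℓ => by
    funext k
    simp [hv, Agg.apply, Finset.sum_apply, hidden, div_eq_inv_mul]

lemma feat_zero_of_forall_label {agg : Agg} {G : LabeledGraph α} {v : G.V}
    (hv : ∀ p, G.label v p) : 𝒢.feat agg G 0 v = 1 :=
  funext fun _ => by simp [GNN.feat, hv]

lemma feat_zero_of_forall_not_label {agg : Agg} {G : LabeledGraph α} {v : G.V}
    (hv : ∀ p, ¬ G.label v p) : 𝒢.feat agg G 0 v = 0 :=
  funext fun _ => by simp [GNN.feat, hv]

lemma continuous_featFrom (hc : 𝒢.HasContinuousCom) (x : Fin (𝒢.δ 0) → ℝ) {T : Type*}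
    [TopologicalSpace T] {a : T → 𝒢.Hidden} (ha : Continuous a) :
    ∀ n ≤ 𝒢.L, Continuous fun t => 𝒢.featFrom x (a t) n
  | 0, _ => continuous_const
  | n + 1, h => by
    simp only [featFrom, dif_pos (show n < 𝒢.L by omega)]
    exact (hc n h).comp
      ((continuous_featFrom hc x ha n (by omega)).prodMk ((continuous_apply _).comp ha))

variable (𝒢)

noncomputable def sinkHidden (x : Fin (𝒢.δ 0) → ℝ) : 𝒢.Hidden := fun ℓ => 𝒢.featFrom x 0 ℓ

/-- The hidden features of an unlabelled vertex whose successors are sinks, a fraction `ρ` of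
them carrying every label and the others none. -/
noncomputable def starHidden (ρ : ℝ) : 𝒢.Hidden :=
  fun ℓ => 𝒢.featFrom 0 (ρ • 𝒢.sinkHidden 1 + (1 - ρ) • 𝒢.sinkHidden 0) ℓ

lemma continuous_starHidden (hc : 𝒢.HasContinuousCom) : Continuous 𝒢.starHidden :=
  continuous_pi fun ℓ => continuous_featFrom hc 0 (by fun_prop) ℓ.1 ℓ.2.le

end GNN

namespace LabeledGraph

/-- A root `none` with children `i : ι`, where child `i` has `p i` leaves carrying every label
and `q i` unlabelled leaves. -/
def twoLevel (α : Type) {ι : Type} [Fintype ι] (p q : ι → ℕ) : LabeledGraph α where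
  V := Option (ι ⊕ Σ i, Fin (p i) ⊕ Fin (q i))
  adj
    | none, some (.inl _) => True
    | some (.inl i), some (.inr ⟨i', _⟩) => i = i'
    | _, _ => False
  label
    | some (.inr ⟨_, .inl _⟩), _ => True
    | _, _ => False

namespace twoLevel
variable {α ι : Type} [Fintype ι] {p q : ι → ℕ}

def root : (twoLevel α p q).V := none

def child : ι ↪ (twoLevel α p q).V :=
  ⟨fun i => some (.inl i), fun _ _ h => by cases h; rfl⟩

def leaf (i : ι) : Fin (p i) ⊕ Fin (q i) ↪ (twoLevel α p q).V :=
  ⟨fun k => some (.inr ⟨i, k⟩), fun _ _ h => by cases h; rfl⟩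

lemma adj_root_iff (u : (twoLevel α p q).V) :
    (twoLevel α p q).adj root u ↔ u ∈ range child := by
  constructor
  · rcases u with _ | i | ⟨i, k⟩ <;> intro h
    exacts [h.elim, ⟨i, rfl⟩, h.elim]
  · rintro ⟨i, rfl⟩
    trivial

lemma adj_child_iff (i : ι) (u : (twoLevel α p q).V) :
    (twoLevel α p q).adj (child i) u ↔ u ∈ range (leaf i) := by
  constructor
  · rcases u with _ | i' | ⟨i', k⟩ <;> intro h
    · exact h.elim
    · exact h.elim
    · obtain rfl : i = i' := h
      exact ⟨k, rfl⟩
  · rintro ⟨k, rfl⟩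
    exact rfl

lemma nbhdFinset_leaf (i : ι) (k : Fin (p i) ⊕ Fin (q i)) :
    (twoLevel α p q).nbhdFinset (leaf i k) = ∅ :=
  Finset.filter_false_of_mem fun u _ h => by rcases u with _ | _ | _ <;> exact h.elim

lemma label_leaf_iff {i : ι} {k : Fin (p i) ⊕ Fin (q i)} {a : α} :
    (twoLevel α p q).label (leaf i k) a ↔ k.isLeft := by
  rcases k with j | j
  exacts [iff_of_true trivial rfl, iff_of_false id (by simp)]

lemma sat_child_iff (i : ι) (a : α) :
    RML.sat (twoLevel α p q) (.diaGt half (.atom a)) (child i) ↔ q i < p i := by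
  have hcount : (Finset.univ.filter fun k => RML.sat (twoLevel α p q) (.atom a) (leaf i k)).card
      = p i := by
    rw [Finset.card_filter, Fintype.sum_sum_type]
    simp [RML.sat, label_leaf_iff]
  rw [RML.sat_diaGt_half_iff (leaf i) (adj_child_iff i), hcount, Fintype.card_sum,
    Fintype.card_fin, Fintype.card_fin]
  omega

lemma sat_root_iff (a : α) :
    RML.sat (twoLevel α p q) (.diaGt half (.diaGt half (.atom a))) root ↔
      Fintype.card ι < 2 * (Finset.univ.filter fun i => q i < p i).card := by
  simp only [RML.sat_diaGt_half_iff child adj_root_iff, sat_child_iff]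

variable [Fintype α] (𝒢 : GNN α)

lemma hidden_leaf_inl (agg : Agg) (i : ι) (j : Fin (p i)) :
    𝒢.hidden agg (twoLevel α p q) (leaf i (.inl j)) = 𝒢.sinkHidden 1 := by
  funext ℓ
  rw [GNN.hidden, GNN.feat_eq_featFrom_of_nbhdFinset_eq_empty (nbhdFinset_leaf i _) ℓ ℓ.2.le,
    GNN.feat_zero_of_forall_label fun _ => label_leaf_iff.2 rfl]
  rfl

lemma hidden_leaf_inr (agg : Agg) (i : ι) (j : Fin (q i)) :
    𝒢.hidden agg (twoLevel α p q) (leaf i (.inr j)) = 𝒢.sinkHidden 0 := by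
  funext ℓ
  rw [GNN.hidden, GNN.feat_eq_featFrom_of_nbhdFinset_eq_empty (nbhdFinset_leaf i _) ℓ ℓ.2.le,
    GNN.feat_zero_of_forall_not_label fun _ h => by simpa using label_leaf_iff.1 h]
  rfl

lemma hidden_child (i : ι) (hi : 0 < p i + q i) :
    𝒢.hidden .mean (twoLevel α p q) (child i) = 𝒢.starHidden (p i / (p i + q i)) := by
  funext ℓ
  rw [GNN.hidden, GNN.feat_mean_eq_featFrom (leaf i) (nbhdFinset_eq_map _ (adj_child_iff i)) ℓ
    ℓ.2.le, GNN.feat_zero_of_forall_not_label fun _ => id, GNN.starHidden]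
  congr 1
  simp only [Fintype.sum_sum_type, hidden_leaf_inl, hidden_leaf_inr, Finset.sum_const,
    Finset.card_univ, Fintype.card_sum, Fintype.card_fin]
  have : (p i + q i : ℝ) ≠ 0 := by exact_mod_cast hi.ne'
  match_scalars
  · field_simp
  · field_simp
    ring

lemma feat_root (h : ∀ i, 0 < p i + q i) :
    𝒢.feat .mean (twoLevel α p q) 𝒢.L root =
      𝒢.featFrom 0 ((Fintype.card ι : ℝ)⁻¹ • ∑ i, 𝒢.starHidden (p i / (p i + q i))) 𝒢.L := by
  rw [GNN.feat_mean_eq_featFrom child (nbhdFinset_eq_map _ adj_root_iff) _ le_rfl,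
    GNN.feat_zero_of_forall_not_label fun _ => id]
  simp only [hidden_child _ _ (h _)]

end twoLevel
end LabeledGraph

noncomputable def majorityRatio (s : ℕ) : ℝ := (s + 1) / (2 * s + 1)

lemma tendsto_majorityRatio : Tendsto majorityRatio atTop (𝓝 2⁻¹) := by
  have h := ((tendsto_one_div_add_atTop_nhds_zero_nat (𝕜 := ℝ)).const_sub 2).inv₀
    (by norm_num)
  rw [sub_zero] at h
  refine h.congr fun s => ?_
  have : (s : ℝ) + 1 ≠ 0 := by positivity
  have e : 2 - 1 / ((s : ℝ) + 1) = (2 * s + 1) / (s + 1) := by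
    field_simp
    ring
  rw [e, inv_div, majorityRatio]

namespace LabeledGraph

abbrev majorityTree (α : Type) (N : Multiset ℕ) (b : ℕ) : LabeledGraph α :=
  twoLevel α (Sum.elim (fun s : N => (s : ℕ) + 1) fun _ : Fin b => 1)
    (Sum.elim (fun s : N => (s : ℕ)) fun _ => 1)

lemma sat_majorityTree_iff {α : Type} (N : Multiset ℕ) (b : ℕ) (a : α) :
    RML.sat (majorityTree α N b) (.diaGt half (.diaGt half (.atom a))) twoLevel.root ↔
      b < Multiset.card N := by
  rw [twoLevel.sat_root_iff, Finset.card_filter, Fintype.sum_sum_type]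
  simp only [Fintype.card_sum, Multiset.card_coe, Fintype.card_fin, Sum.elim_inl, Sum.elim_inr,
    lt_add_iff_pos_right, Order.lt_one_iff, lt_self_iff_false, ↓reduceIte, Finset.sum_const,
    Finset.card_univ, smul_eq_mul, mul_one]
  omega

end LabeledGraph

open LabeledGraph in
lemma GNN.accepts_majorityTree_iff {α : Type} [Fintype α] (𝒢 : GNN α) {N : Multiset ℕ} {b : ℕ}
    (hNb : 0 < Multiset.card N + b) :
    𝒢.accepts .mean (majorityTree α N b) twoLevel.root ↔
      mixture (𝒢.starHidden 2⁻¹) (fun s => 𝒢.starHidden (majorityRatio s) - 𝒢.starHidden 2⁻¹)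
        N b ∈ (fun m => 𝒢.featFrom 0 m 𝒢.L) ⁻¹' {y | 𝒢.Cls y} := by
  rw [GNN.accepts_iff_cls, twoLevel.feat_root 𝒢 fun i => by cases i <;> simp]
  rw [mixture_sub_eq _ _ _ _ hNb, Set.mem_preimage, Set.mem_ofPred_eq]
  congr! 3
  · simp
  rw [Fintype.sum_sum_type, ← Multiset.map_univ]
  simp only [Sum.elim_inl, Sum.elim_inr, Finset.sum_const, Finset.card_univ, Fintype.card_fin]
  congr 2
  · funext x
    rw [majorityRatio]
    push_cast
    ring_nf
  · norm_num

/-- The RML formula ◊^{>1/2}◊^{>1/2}P (over Π = {P}) is not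
expressible by any Mean-GNN with continuous combination functions. -/
theorem stmt19 :
    ¬ ∃ 𝒢 : GNN (Fin 1), 𝒢.HasContinuousCom ∧
      ∀ (G : LabeledGraph (Fin 1)) (v : G.V),
        𝒢.accepts Agg.mean G v ↔
          RML.sat G (RML.diaGt half (RML.diaGt half (RML.atom 0))) v := by
  rintro ⟨𝒢, hc, h𝒢⟩
  have hsep : SeparatesMajority ((fun m => 𝒢.featFrom 0 m 𝒢.L) ⁻¹' {y | 𝒢.Cls y})
      (𝒢.starHidden 2⁻¹) (fun s => 𝒢.starHidden (majorityRatio s) - 𝒢.starHidden 2⁻¹) :=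
    fun N b hNb => by
      rw [← 𝒢.accepts_majorityTree_iff hNb, h𝒢, LabeledGraph.sat_majorityTree_iff]
  have hv : Tendsto (fun s => 𝒢.starHidden (majorityRatio s) - 𝒢.starHidden 2⁻¹) atTop (𝓝 0) := by
    simpa using (((𝒢.continuous_starHidden hc).tendsto _).comp tendsto_majorityRatio).sub_const
      (𝒢.starHidden 2⁻¹)
  have hcont := GNN.continuous_featFrom hc 0 continuous_id 𝒢.L le_rfl
  rcases 𝒢.isOpen_or_isClosed_setOf_cls with h | h
  · exact hsep.not_isOpen hv (h.preimage hcont)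
  · exact hsep.not_isClosed hv (h.preimage hcont)
end
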